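/- arXiv:2306.04004 — 11 statements merged into one kernel-verified Lean document; each statement's English description precedes it below -/
import Mathlib

section
/- Let n ≥ 2, let w be a symmetric, nonnegative weight function on Fin n with zero diagonal, let L be the associated weighted graph Laplacian, and let v be a vertex with weighted degree W(v) = ∑ j, w v j > 0. Then the Schur complement of L eliminating v satisfies SC(v) = L − STAR(v) + CLIQUE(v); that is, L − (1/(L v v)) • (L·e_v)·(L·e_v)ᵀ = L − ∑ j, (w v j) • Δ(v,j) + (1/(2·W(v))) • ∑ j, ∑ k, (w v j)·(w v k) • Δ(j,k). -/
open Matrix BigOperators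

/-- The elementary Laplacian `Δ(i,j) = (e_i − e_j)(e_i − e_j)ᵀ`. -/
noncomputable def elemLap {n : ℕ} (i j : Fin n) : Matrix (Fin n) (Fin n) ℝ :=
  Matrix.vecMulVec (Pi.single i 1 - Pi.single j 1) (Pi.single i 1 - Pi.single j 1)

/-- The weighted graph Laplacian of a weight function `w`. -/
noncomputable def lap {n : ℕ} (w : Fin n → Fin n → ℝ) : Matrix (Fin n) (Fin n) ℝ :=
  Matrix.of fun i j => if i = j then ∑ k, w i k else -(w i j)

/-!
Write `e_v` for the standard basis vector, `d = w v` for the row of weights at `v` and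
`W = ∑ j, d j`. Symmetry and the zero diagonal give `L e_v = W e_v - d` and `L v v = W`, so the
Schur complement is `L - W e_v e_vᵀ + e_v dᵀ + d e_vᵀ - W⁻¹ d dᵀ`. Expanding the elementary
Laplacians, `STAR(v) = W e_v e_vᵀ - e_v dᵀ - d e_vᵀ + diag d` and
`∑ j k, d j d k Δ(j,k) = 2 W diag d - 2 d dᵀ`; the `diag d` terms cancel in `-STAR + CLIQUE`.
-/

section VecMulVec

variable {ι R : Type*} [Fintype ι] [DecidableEq ι] [CommSemiring R]

theorem sum_smul_vecMulVec_single_right (x d : ι → R) :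
    ∑ j, d j • vecMulVec x (Pi.single j 1) = vecMulVec x d := by
  ext a b
  simp [vecMulVec_apply, Pi.single_apply, Matrix.sum_apply, mul_comm]

theorem sum_smul_vecMulVec_single_left (x d : ι → R) :
    ∑ j, d j • vecMulVec (Pi.single j 1) x = vecMulVec d x := by
  ext a b
  simp [vecMulVec_apply, Pi.single_apply, Matrix.sum_apply]

theorem sum_smul_vecMulVec_single_single (d : ι → R) :
    ∑ j, d j • vecMulVec (Pi.single j 1) (Pi.single j 1) = diagonal d := by
  ext a b
  by_cases h : a = b
  · subst h
    simp [vecMulVec_apply, Matrix.sum_apply, Pi.single_apply]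
  · simp [vecMulVec_apply, Matrix.sum_apply, Pi.single_apply, h]

end VecMulVec

theorem elemLap_eq {n : ℕ} (i j : Fin n) :
    elemLap i j = vecMulVec (Pi.single i 1) (Pi.single i 1)
      - vecMulVec (Pi.single i 1) (Pi.single j 1) - vecMulVec (Pi.single j 1) (Pi.single i 1)
      + vecMulVec (Pi.single j 1) (Pi.single j 1) := by
  rw [elemLap, sub_vecMulVec, vecMulVec_sub, vecMulVec_sub]
  abel

theorem sum_smul_elemLap_left {n : ℕ} (d : Fin n → ℝ) (v : Fin n) :
    ∑ j, d j • elemLap v j = (∑ j, d j) • vecMulVec (Pi.single v 1) (Pi.single v 1)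
      - vecMulVec (Pi.single v 1) d - vecMulVec d (Pi.single v 1) + diagonal d := by
  simp only [elemLap_eq, smul_add, smul_sub, Finset.sum_add_distrib, Finset.sum_sub_distrib,
    ← Finset.sum_smul, sum_smul_vecMulVec_single_right, sum_smul_vecMulVec_single_left,
    sum_smul_vecMulVec_single_single]

theorem sum_sum_smul_elemLap {n : ℕ} (d : Fin n → ℝ) :
    ∑ j, ∑ k, (d j * d k) • elemLap j k
      = (2 * ∑ j, d j) • diagonal d - (2 : ℝ) • vecMulVec d d := by
  simp only [mul_smul, ← Finset.smul_sum, sum_smul_elemLap_left, smul_add, smul_sub,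
    Finset.sum_add_distrib, Finset.sum_sub_distrib, smul_comm (d _) (∑ j, d j),
    ← Finset.smul_sum, ← Finset.sum_smul, sum_smul_vecMulVec_single_right,
    sum_smul_vecMulVec_single_left, sum_smul_vecMulVec_single_single]
  module

theorem lap_apply_self {n : ℕ} (w : Fin n → Fin n → ℝ) (v : Fin n) :
    lap w v v = ∑ j, w v j := by
  simp [lap]

theorem lap_mulVec_single {n : ℕ} (w : Fin n → Fin n → ℝ) (hsymm : ∀ i j, w i j = w j i)
    (hdiag : ∀ i, w i i = 0) (v : Fin n) :
    lap w *ᵥ Pi.single v 1 = (∑ j, w v j) • Pi.single v 1 - w v := by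
  ext k
  rw [mulVec_single_one]
  by_cases h : k = v
  · subst h
    simp [lap, hdiag]
  · simp [lap, h, hsymm k v]

theorem schur_complement_eq_star_clique_general {n : ℕ}
    (w : Fin n → Fin n → ℝ)
    (hsymm : ∀ i j, w i j = w j i)
    (hdiag : ∀ i, w i i = 0) (v : Fin n) (hdeg : 0 < ∑ j, w v j) :
    lap w - (1 / (lap w v v)) •
        Matrix.vecMulVec ((lap w).mulVec (Pi.single v 1)) ((lap w).mulVec (Pi.single v 1))
      = lap w - (∑ j, (w v j) • elemLap v j)
        + (1 / (2 * ∑ j, w v j)) • ∑ j, ∑ k, (w v j * w v k) • elemLap j k := by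
  rw [lap_apply_self, lap_mulVec_single w hsymm hdiag, sum_smul_elemLap_left,
    sum_sum_smul_elemLap]
  simp only [sub_vecMulVec, vecMulVec_sub, smul_vecMulVec, vecMulVec_smul]
  match_scalars <;> grind

theorem schur_complement_eq_star_clique {n : ℕ} (hn : 2 ≤ n)
    (w : Fin n → Fin n → ℝ)
    (hsymm : ∀ i j, w i j = w j i) (hnonneg : ∀ i j, 0 ≤ w i j)
    (hdiag : ∀ i, w i i = 0) (v : Fin n) (hdeg : 0 < ∑ j, w v j) :
    lap w - (1 / (lap w v v)) •
        Matrix.vecMulVec ((lap w).mulVec (Pi.single v 1)) ((lap w).mulVec (Pi.single v 1))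
      = lap w - (∑ j, (w v j) • elemLap v j)
        + (1 / (2 * ∑ j, w v j)) • ∑ j, ∑ k, (w v j * w v k) • elemLap j k :=
  schur_complement_eq_star_clique_general w hsymm hdiag v hdeg
end

section
/- Let n ≥ 2, let w be a symmetric, nonnegative weight function on Fin n with zero diagonal, let L be the associated weighted graph Laplacian, and let v be a vertex with W(v) = ∑ j, w v j > 0. Then the Schur complement SC(v) = L − (1/(L v v)) • (L·e_v)·(L·e_v)ᵀ is again a weighted graph Laplacian on the remaining vertices: it is symmetric, positive semidefinite, its v-th row and v-th column are identically zero, its off-diagonal entries are nonpositive, and each of its rows sums to zero. -/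
open Matrix BigOperators

lemma lap_entry_symm {n : ℕ} (w : Fin n → Fin n → ℝ) (hsymm : ∀ i j, w i j = w j i)
    (i j : Fin n) : lap w i j = lap w j i := by
  simp only [lap, Matrix.of_apply]
  rcases eq_or_ne i j with h | h
  · simp [h]
  · simp [h, h.symm, hsymm i j]

lemma lap_rowsum {n : ℕ} (w : Fin n → Fin n → ℝ) (hdiag : ∀ i, w i i = 0) (i : Fin n) :
    ∑ j, lap w i j = 0 := by
  have key : ∀ j, lap w i j = (if j = i then (∑ k, w i k) + w i j else 0) - w i j := by
    intro j
    simp only [lap, Matrix.of_apply]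
    rcases eq_or_ne i j with rfl | h
    · simp
    · simp [h, h.symm]
  simp_rw [key, Finset.sum_sub_distrib, Finset.sum_ite_eq' Finset.univ i]
  simp [hdiag i]

lemma lap_quad {n : ℕ} (w : Fin n → Fin n → ℝ) (hsymm : ∀ i j, w i j = w j i)
    (hdiag : ∀ i, w i i = 0) (x : Fin n → ℝ) :
    x ⬝ᵥ (lap w).mulVec x = (1/2) * ∑ i, ∑ j, w i j * (x i - x j)^2 := by
  have hrow : ∀ i, ((lap w).mulVec x) i = (∑ k, w i k) * x i - ∑ j, w i j * x j := by
    intro i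
    simp only [mulVec, dotProduct, lap, Matrix.of_apply]
    have : ∀ j, (if i = j then ∑ k, w i k else -(w i j)) * x j
        = (if j = i then (∑ k, w i k) * x i else 0) - w i j * x j := by
      intro j
      rcases eq_or_ne i j with h | h
      · subst h; simp [hdiag i]
      · rw [if_neg h, if_neg (Ne.symm h)]; ring
    simp_rw [this, Finset.sum_sub_distrib, Finset.sum_ite_eq' Finset.univ i]
    simp
  simp only [dotProduct, hrow]
  have L1 : ∀ i, x i * ((∑ k, w i k) * x i - ∑ j, w i j * x j)
      = ∑ j, (w i j * (x i)^2 - w i j * x i * x j) := by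
    intro i
    rw [Finset.sum_sub_distrib, mul_sub]
    congr 1
    · rw [show x i * ((∑ k, w i k) * x i) = (∑ k, w i k) * (x i)^2 by ring, Finset.sum_mul]
    · rw [Finset.mul_sum]
      exact Finset.sum_congr rfl fun j _ => by ring
  simp_rw [L1]
  have key : ∀ i j, w i j * (x i - x j)^2
      = (w i j * (x i)^2 - w i j * x i * x j) + (w i j * (x j)^2 - w i j * x j * x i) := by
    intros; ring
  simp_rw [key, Finset.sum_add_distrib]
  have hsw : ∑ i, ∑ j, (w i j * (x j)^2 - w i j * x j * x i)
      = ∑ i, ∑ j, (w i j * (x i)^2 - w i j * x i * x j) := by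
    rw [Finset.sum_comm]
    refine Finset.sum_congr rfl fun i _ => Finset.sum_congr rfl fun j _ => ?_
    rw [hsymm j i]
  rw [hsw]
  ring

theorem schur_complement_is_laplacian {n : ℕ} (hn : 2 ≤ n)
    (w : Fin n → Fin n → ℝ)
    (hsymm : ∀ i j, w i j = w j i) (hnonneg : ∀ i j, 0 ≤ w i j)
    (hdiag : ∀ i, w i i = 0) (v : Fin n) (hdeg : 0 < ∑ j, w v j)
    (S : Matrix (Fin n) (Fin n) ℝ)
    (hS : S = lap w - (1 / (lap w v v)) •
        Matrix.vecMulVec ((lap w).mulVec (Pi.single v 1)) ((lap w).mulVec (Pi.single v 1))) :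
    S.IsSymm ∧ S.PosSemidef ∧ (∀ j, S v j = 0) ∧ (∀ i, S i v = 0) ∧
      (∀ i j, i ≠ j → S i j ≤ 0) ∧ (∀ i, ∑ j, S i j = 0) := by
  have hWvv : lap w v v = ∑ k, w v k := by simp [lap]
  have hW : (0:ℝ) < lap w v v := by rw [hWvv]; exact hdeg
  have hu : (lap w).mulVec (Pi.single v 1) = fun i => lap w i v := by
    rw [Matrix.mulVec_single]; funext i; simp
  have hSentry : ∀ i j, S i j = lap w i j - (lap w i v * lap w j v) / lap w v v := by
    intro i j
    rw [hS]
    simp [hu, vecMulVec_apply, lap_entry_symm w hsymm j v]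
    ring
  -- row v and column v vanish
  have hcol : ∀ i, S i v = 0 := by
    intro i
    rw [hSentry i v, mul_div_assoc, div_self hW.ne', mul_one, sub_self]
  have hrowv : ∀ j, S v j = 0 := by
    intro j
    rw [hSentry v j, lap_entry_symm w hsymm v j, mul_comm (lap w v v),
      mul_div_assoc, div_self hW.ne', mul_one, sub_self]
  -- symmetry
  have hSsymm : S.IsSymm := by
    ext i j
    simp only [transpose_apply]
    rw [hSentry i j, hSentry j i, lap_entry_symm w hsymm i j]
    ring
  -- off diagonal nonpositive
  have hoff : ∀ i j, i ≠ j → S i j ≤ 0 := by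
    intro i j hij
    rcases eq_or_ne i v with rfl | hiv
    · rw [hrowv j]
    rcases eq_or_ne j v with rfl | hjv
    · rw [hcol i]
    rw [hSentry i j]
    have h1 : lap w i j = -(w i j) := by simp [lap, hij]
    have h2 : lap w i v = -(w i v) := by simp [lap, hiv]
    have h3 : lap w j v = -(w j v) := by simp [lap, hjv]
    rw [h1, h2, h3, show -w i v * -w j v = w i v * w j v from by ring]
    have hdd : (0:ℝ) ≤ w i v * w j v / lap w v v :=
      div_nonneg (mul_nonneg (hnonneg i v) (hnonneg j v)) hW.le
    linarith [hnonneg i j]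
  -- row sums
  have hrsum : ∀ i, ∑ j, S i j = 0 := by
    intro i
    simp_rw [hSentry]
    rw [Finset.sum_sub_distrib, lap_rowsum w hdiag i]
    have : ∑ j, lap w i v * lap w j v / lap w v v
        = (lap w i v / lap w v v) * ∑ j, lap w j v := by
      rw [Finset.mul_sum]; exact Finset.sum_congr rfl fun j _ => by ring
    rw [this]
    have : ∑ j, lap w j v = 0 := by
      rw [← lap_rowsum w hdiag v]
      exact Finset.sum_congr rfl fun j _ => (lap_entry_symm w hsymm j v)
    rw [this]; ring
  -- positive semidefiniteness
  have hpsd : S.PosSemidef := by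
    rw [posSemidef_iff_dotProduct_mulVec]
    constructor
    · exact hSsymm
    · intro x
      have hx : star x = x := by simp
      set c : ℝ := ∑ j, lap w j v * x j with hc
      -- quadratic form of S
      have hq : x ⬝ᵥ S.mulVec x = x ⬝ᵥ (lap w).mulVec x - c^2 / lap w v v := by
        rw [hS]
        simp only [sub_mulVec, dotProduct_sub, smul_mulVec, dotProduct_smul, hu]
        have hvm : (vecMulVec (fun i => lap w i v) (fun i => lap w i v)).mulVec x
            = fun i => lap w i v * c := by
          funext i
          show ∑ j, (lap w i v * lap w j v) * x j = lap w i v * c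
          rw [hc, Finset.mul_sum]
          exact Finset.sum_congr rfl fun j _ => by ring
        rw [hvm]
        have : x ⬝ᵥ (fun i => lap w i v * c) = c * c := by
          calc x ⬝ᵥ (fun i => lap w i v * c) = ∑ i, x i * (lap w i v * c) := rfl
            _ = (∑ i, lap w i v * x i) * c := by
                rw [Finset.sum_mul]; exact Finset.sum_congr rfl fun i _ => by ring
            _ = c * c := by rw [← hc]
        rw [this]
        field_simp
        rw [smul_eq_mul, mul_sub, ← mul_assoc, mul_one_div_cancel hW.ne', one_mul]
        ring
      -- consider y = x - (c/W) • e_v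
      set t : ℝ := -c / lap w v v with ht
      set y : Fin n → ℝ := x + t • (Pi.single v 1 : Fin n → ℝ) with hy
      have hyq : 0 ≤ y ⬝ᵥ (lap w).mulVec y := by
        rw [lap_quad w hsymm hdiag y]
        have : 0 ≤ ∑ i, ∑ j, w i j * (y i - y j)^2 := by
          apply Finset.sum_nonneg; intro i _
          apply Finset.sum_nonneg; intro j _
          have := hnonneg i j
          positivity
        linarith
      have hxLe : x ⬝ᵥ (lap w).mulVec (Pi.single v 1 : Fin n → ℝ) = c := by
        rw [hu, hc]
        exact Finset.sum_congr rfl fun j _ => by ring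
      have heLx : (Pi.single v 1 : Fin n → ℝ) ⬝ᵥ (lap w).mulVec x = c := by
        rw [single_dotProduct, one_mul, hc]
        show ∑ j, lap w v j * x j = _
        exact Finset.sum_congr rfl fun j _ => by rw [lap_entry_symm w hsymm v j]
      have heLe : (Pi.single v 1 : Fin n → ℝ) ⬝ᵥ (lap w).mulVec (Pi.single v 1 : Fin n → ℝ)
          = lap w v v := by
        rw [hu, single_dotProduct, one_mul]
      have hexp : y ⬝ᵥ (lap w).mulVec y
          = x ⬝ᵥ (lap w).mulVec x + 2 * t * c + t^2 * lap w v v := by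
        rw [hy, mulVec_add, mulVec_smul, dotProduct_add, add_dotProduct, add_dotProduct,
          smul_dotProduct, smul_dotProduct, dotProduct_smul, dotProduct_smul,
          hxLe, heLx, heLe]
        simp only [smul_eq_mul]
        ring
      rw [hx, hq]
      have : x ⬝ᵥ (lap w).mulVec x - c^2 / lap w v v = y ⬝ᵥ (lap w).mulVec y := by
        rw [hexp, ht]
        field_simp
        ring
      rw [this]
      exact hyq
  exact ⟨hSsymm, hpsd, hrowv, hcol, hoff, hrsum⟩
end

section
/- Let n ≥ 2, let w be a symmetric, nonnegative weight function on Fin n with zero diagonal, let v be a vertex with W(v) > 0, and let x : Fin m → Fin n be an injective enumeration of the neighbors of v (so w v (x l) > 0 for every l and w v j = 0 whenever j is not in the image of x). With W = W(v), partial sums S(l) = ∑_{k ≤ l} w v (x k), conditional probabilities p(l,q) = (w v (x q))/(W − S(l)) and new-edge weights ω(l,q) = (w v (x l))·(W − S(l))/W for l < q in Fin m, the expected approximate clique equals the exact clique: ∑ over pairs (l,q) with l < q of p(l,q)·ω(l,q) • Δ(x l, x q) = CLIQUE(v). -/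
open Matrix BigOperators

lemma elemLap_comm {n : ℕ} (i j : Fin n) : elemLap i j = elemLap j i := by
  unfold elemLap
  rw [show (Pi.single j 1 - Pi.single i 1 : Fin n → ℝ) = -(Pi.single i 1 - Pi.single j 1) by ring]
  ext a b
  simp [Matrix.vecMulVec_apply]
  ring

lemma elemLap_self {n : ℕ} (i : Fin n) : elemLap i i = 0 := by
  unfold elemLap
  ext a b
  simp [Matrix.vecMulVec_apply]

theorem expected_approx_clique_eq_clique {n m : ℕ} (hn : 2 ≤ n)
    (w : Fin n → Fin n → ℝ)
    (hsymm : ∀ i j, w i j = w j i) (hnonneg : ∀ i j, 0 ≤ w i j)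
    (hdiag : ∀ i, w i i = 0) (v : Fin n) (hdeg : 0 < ∑ j, w v j)
    (x : Fin m → Fin n) (hinj : Function.Injective x)
    (hpos : ∀ l, 0 < w v (x l))
    (hzero : ∀ j, j ∉ Set.range x → w v j = 0) :
    (∑ l : Fin m, ∑ q ∈ Finset.univ.filter (fun q => l < q),
        (((w v (x q)) /
            ((∑ j, w v j) - ∑ k ∈ Finset.univ.filter (fun k => k ≤ l), w v (x k))) *
          ((w v (x l)) *
            ((∑ j, w v j) - ∑ k ∈ Finset.univ.filter (fun k => k ≤ l), w v (x k)) /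
            (∑ j, w v j))) • elemLap (x l) (x q))
      = (1 / (2 * ∑ j, w v j)) • ∑ j, ∑ k, (w v j * w v k) • elemLap j k := by
  classical
  set W := ∑ j, w v j with hW
  have hWne : W ≠ 0 := ne_of_gt hdeg
  -- W is the sum of weights on the range of x
  have hWx : W = ∑ l : Fin m, w v (x l) := by
    rw [hW]
    rw [← Finset.sum_image (f := fun j => w v j)
      (g := x) (s := Finset.univ) (by intro a _ b _ h; exact hinj h)]
    symm
    apply Finset.sum_subset (Finset.subset_univ _)
    intro j _ hj
    apply hzero
    intro ⟨l, hl⟩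
    exact hj (Finset.mem_image.mpr ⟨l, Finset.mem_univ _, hl⟩)
  -- the denominator is positive whenever there exists q > l
  have hD : ∀ l q : Fin m, l < q →
      0 < W - ∑ k ∈ Finset.univ.filter (fun k => k ≤ l), w v (x k) := by
    intro l q hlq
    have hsplit : W = (∑ k ∈ Finset.univ.filter (fun k => k ≤ l), w v (x k))
        + ∑ k ∈ Finset.univ.filter (fun k => ¬ k ≤ l), w v (x k) := by
      rw [hWx, ← Finset.sum_filter_add_sum_filter_not Finset.univ (fun k => k ≤ l)]
    have hq : q ∈ Finset.univ.filter (fun k : Fin m => ¬ k ≤ l) := by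
      simp [not_le, hlq]
    have hge : w v (x q) ≤ ∑ k ∈ Finset.univ.filter (fun k => ¬ k ≤ l), w v (x k) :=
      Finset.single_le_sum (fun k _ => hnonneg v (x k)) hq
    have := hpos q
    linarith
  -- simplify each coefficient
  have hcoef : ∀ l q : Fin m, l < q →
      (((w v (x q)) /
          (W - ∑ k ∈ Finset.univ.filter (fun k => k ≤ l), w v (x k))) *
        ((w v (x l)) *
          (W - ∑ k ∈ Finset.univ.filter (fun k => k ≤ l), w v (x k)) / W))
      = (1 / W) * (w v (x l) * w v (x q)) := by
    intro l q hlq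
    have hd := hD l q hlq
    field_simp
  -- rewrite LHS
  set T : Matrix (Fin n) (Fin n) ℝ :=
    ∑ l : Fin m, ∑ q ∈ Finset.univ.filter (fun q => l < q),
      (w v (x l) * w v (x q)) • elemLap (x l) (x q) with hT
  have hLHS : (∑ l : Fin m, ∑ q ∈ Finset.univ.filter (fun q => l < q),
        (((w v (x q)) /
            (W - ∑ k ∈ Finset.univ.filter (fun k => k ≤ l), w v (x k))) *
          ((w v (x l)) *
            (W - ∑ k ∈ Finset.univ.filter (fun k => k ≤ l), w v (x k)) / W))
          • elemLap (x l) (x q)) = (1 / W) • T := by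
    rw [hT, Finset.smul_sum]
    apply Finset.sum_congr rfl
    intro l _
    rw [Finset.smul_sum]
    apply Finset.sum_congr rfl
    intro q hq
    rw [Finset.mem_filter] at hq
    rw [hcoef l q hq.2, mul_smul]
  -- rewrite RHS double sum onto the range of x
  have hRHSsum : (∑ j, ∑ k, (w v j * w v k) • elemLap j k)
      = ∑ l : Fin m, ∑ q : Fin m, (w v (x l) * w v (x q)) • elemLap (x l) (x q) := by
    have inner : ∀ j : Fin n, (∑ k, (w v j * w v k) • elemLap j k)
        = ∑ q : Fin m, (w v j * w v (x q)) • elemLap j (x q) := by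
      intro j
      rw [← Finset.sum_image (f := fun k => (w v j * w v k) • elemLap j k)
        (g := x) (s := Finset.univ) (by intro a _ b _ h; exact hinj h)]
      symm
      apply Finset.sum_subset (Finset.subset_univ _)
      intro k _ hk
      have : w v k = 0 := hzero k (by
        intro ⟨l, hl⟩
        exact hk (Finset.mem_image.mpr ⟨l, Finset.mem_univ _, hl⟩))
      simp [this]
    calc (∑ j, ∑ k, (w v j * w v k) • elemLap j k)
        = ∑ j, ∑ q : Fin m, (w v j * w v (x q)) • elemLap j (x q) := by
          exact Finset.sum_congr rfl fun j _ => inner j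
      _ = ∑ l : Fin m, ∑ q : Fin m, (w v (x l) * w v (x q)) • elemLap (x l) (x q) := by
          rw [← Finset.sum_image (f := fun j => ∑ q : Fin m,
            (w v j * w v (x q)) • elemLap j (x q))
            (g := x) (s := Finset.univ) (by intro a _ b _ h; exact hinj h)]
          symm
          apply Finset.sum_subset (Finset.subset_univ _)
          intro j _ hj
          have : w v j = 0 := hzero j (by
            intro ⟨l, hl⟩
            exact hj (Finset.mem_image.mpr ⟨l, Finset.mem_univ _, hl⟩))
          simp [this]
  -- double sum equals 2 copies of T
  have hdouble : (∑ l : Fin m, ∑ q : Fin m,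
      (w v (x l) * w v (x q)) • elemLap (x l) (x q)) = T + T := by
    have hsplit : ∀ l : Fin m, (∑ q : Fin m, (w v (x l) * w v (x q)) • elemLap (x l) (x q))
        = (∑ q ∈ Finset.univ.filter (fun q => l < q),
            (w v (x l) * w v (x q)) • elemLap (x l) (x q))
          + ∑ q ∈ Finset.univ.filter (fun q => q < l),
            (w v (x l) * w v (x q)) • elemLap (x l) (x q) := by
      intro l
      rw [← Finset.sum_filter_add_sum_filter_not Finset.univ (fun q => l < q)
        (fun q => (w v (x l) * w v (x q)) • elemLap (x l) (x q))]
      congr 1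
      rw [show (Finset.univ.filter fun q : Fin m => ¬ l < q)
          = insert l (Finset.univ.filter fun q : Fin m => q < l) by
        ext q
        simp [not_lt, le_iff_lt_or_eq, or_comm, eq_comm (a := q) (b := l)]]
      rw [Finset.sum_insert (by simp)]
      rw [show elemLap (x l) (x l) = 0 from elemLap_self _]
      simp
    rw [Finset.sum_congr rfl fun l _ => hsplit l, Finset.sum_add_distrib]
    congr 1
    -- swap the order in the lower-triangular sum
    have : ∀ (l q : Fin m), (w v (x l) * w v (x q)) • elemLap (x l) (x q)
        = (w v (x q) * w v (x l)) • elemLap (x q) (x l) := by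
      intro l q
      rw [mul_comm, elemLap_comm]
    calc (∑ l : Fin m, ∑ q ∈ Finset.univ.filter (fun q => q < l),
            (w v (x l) * w v (x q)) • elemLap (x l) (x q))
        = ∑ l : Fin m, ∑ q : Fin m, if q < l then
            (w v (x l) * w v (x q)) • elemLap (x l) (x q) else 0 := by
          simp [Finset.sum_filter]
      _ = ∑ q : Fin m, ∑ l : Fin m, if q < l then
            (w v (x l) * w v (x q)) • elemLap (x l) (x q) else 0 := Finset.sum_comm
      _ = ∑ l : Fin m, ∑ q : Fin m, if l < q then
            (w v (x q) * w v (x l)) • elemLap (x q) (x l) else 0 := rfl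
      _ = T := by
          rw [hT]
          simp only [Finset.sum_filter]
          exact Finset.sum_congr rfl fun l _ => Finset.sum_congr rfl fun q _ => by
            rw [this]
  rw [hLHS, hRHSsum, hdouble, smul_add, ← add_smul]
  congr 1
  field_simp
  ring
end

section
/- Single-step unbiasedness of rLap (loop invariant of Theorem 3.1): Let n ≥ 2, let w be a symmetric, nonnegative weight function on Fin n with zero diagonal and Laplacian L, let v be a vertex with W(v) > 0, and let x : Fin m → Fin n be an injective enumeration of the neighbors of v (w v (x l) > 0 for all l, and w v j = 0 for j outside the image of x). Let (Ω, p) be a finite probability space and, for each index l ∈ Fin m with l.val + 1 < m, let Q_l : Ω → Fin m be a random variable taking values q with l < q such that ∑ over ω with Q_l ω = q of p ω equals p(l,q) = (w v (x q))/(W − S(l)), where W = W(v) and S(l) = ∑_{k ≤ l} w v (x k). Then the expectation of the single rLap elimination step equals the exact Schur complement: ∑ ω, p ω • (L − STAR(v) + ∑_{l : l.val+1 < m} ω(l, Q_l ω) • Δ(x l, x (Q_l ω))) = SC(v), where ω(l,q) = (w v (x l))·(W − S(l))/W. -/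
open Matrix BigOperators

private lemma vecMulVec_sub_sub {n : ℕ} (a b : Fin n → ℝ) :
    Matrix.vecMulVec (a - b) (a - b)
      = Matrix.vecMulVec a a - Matrix.vecMulVec a b - Matrix.vecMulVec b a
          + Matrix.vecMulVec b b := by
  ext i j
  simp [Matrix.vecMulVec_apply, Matrix.sub_apply, Matrix.add_apply]
  ring

private lemma filter_to_product {m : ℕ} {M : Type*} [AddCommMonoid M]
    (D : Fin m → Fin m → M) (P : Fin m → Fin m → Prop) [∀ l q, Decidable (P l q)] :
    ∑ l : Fin m, ∑ q ∈ Finset.univ.filter (fun q => P l q), D l q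
      = ∑ z ∈ (Finset.univ ×ˢ Finset.univ).filter (fun z : Fin m × Fin m => P z.1 z.2),
          D z.1 z.2 := by
  rw [Finset.sum_filter, Finset.sum_product]
  simp [Finset.sum_filter]

private lemma pair_sum_double {m : ℕ} {M : Type*} [AddCommGroup M]
    (D : Fin m → Fin m → M) (hsym : ∀ l q, D l q = D q l) (hd : ∀ l, D l l = 0) :
    ∑ l : Fin m, ∑ q : Fin m, D l q
      = (∑ l : Fin m, ∑ q ∈ Finset.univ.filter (fun q => l < q), D l q)
        + (∑ l : Fin m, ∑ q ∈ Finset.univ.filter (fun q => l < q), D l q) := by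
  have h1 : ∀ l : Fin m, ∑ q : Fin m, D l q
      = ∑ q ∈ Finset.univ.filter (fun q => l < q), D l q
        + ∑ q ∈ Finset.univ.filter (fun q => q < l), D l q := by
    intro l
    rw [← Finset.sum_filter_add_sum_filter_not Finset.univ (fun q => l < q) (D l)]
    congr 1
    rw [← Finset.sum_filter_add_sum_filter_not (Finset.univ.filter (fun q => ¬ l < q))
      (fun q => q < l) (D l), Finset.filter_filter, Finset.filter_filter]
    have e1 : (Finset.univ.filter fun a : Fin m => ¬l < a ∧ a < l)
        = Finset.univ.filter fun q : Fin m => q < l := by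
      apply Finset.filter_congr
      intro q _
      constructor
      · exact fun h => h.2
      · exact fun h => ⟨fun h' => absurd h (not_lt.mpr h'.le), h⟩
    have e2 : ∑ q ∈ Finset.univ.filter (fun a : Fin m => ¬l < a ∧ ¬a < l), D l q = 0 := by
      apply Finset.sum_eq_zero
      intro q hq
      obtain ⟨-, h1', h2'⟩ := Finset.mem_filter.mp hq
      have : q = l := le_antisymm (not_lt.mp h1') (not_lt.mp h2')
      rw [this, hd]
    rw [e1, e2, add_zero]
  have h2 : ∑ l : Fin m, ∑ q ∈ Finset.univ.filter (fun q => q < l), D l q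
      = ∑ l : Fin m, ∑ q ∈ Finset.univ.filter (fun q => l < q), D l q := by
    rw [filter_to_product D (fun l q => q < l), filter_to_product D (fun l q => l < q)]
    refine Finset.sum_nbij' Prod.swap Prod.swap ?_ ?_ ?_ ?_ ?_ <;>
      simp +contextual [Finset.mem_filter]
    intro a b _
    exact hsym a b
  simp only [h1, Finset.sum_add_distrib, h2]

private noncomputable def uv {n : ℕ} (v j : Fin n) : Fin n → ℝ :=
  Pi.single v 1 - Pi.single j 1

/-- Single-step unbiasedness of the rLap elimination step (loop invariant of Theorem 3.1):
the expected output of one randomized elimination equals the exact Schur complement. -/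
theorem rLap_single_step_unbiased {n m : ℕ} (hn : 2 ≤ n)
    (w : Fin n → Fin n → ℝ)
    (hsymm : ∀ i j, w i j = w j i) (hnonneg : ∀ i j, 0 ≤ w i j)
    (hdiag : ∀ i, w i i = 0) (v : Fin n) (hdeg : 0 < ∑ j, w v j)
    (x : Fin m → Fin n) (hinj : Function.Injective x)
    (hpos : ∀ l, 0 < w v (x l))
    (hzero : ∀ j, j ∉ Set.range x → w v j = 0)
    (Ω : Type) [Fintype Ω] [Nonempty Ω] (p : Ω → ℝ)
    (hp : ∀ a, 0 ≤ p a) (hp1 : ∑ a, p a = 1)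
    (Q : Fin m → Ω → Fin m)
    (hQgt : ∀ l : Fin m, l.val + 1 < m → ∀ a : Ω, l < Q l a)
    (hQdist : ∀ l : Fin m, l.val + 1 < m → ∀ q : Fin m, l < q →
        ∑ a ∈ Finset.univ.filter (fun a : Ω => Q l a = q), p a
          = (w v (x q)) /
              ((∑ j, w v j) - ∑ k ∈ Finset.univ.filter (fun k => k ≤ l), w v (x k))) :
    ∑ a : Ω, p a •
        (lap w - (∑ j, (w v j) • elemLap v j)
          + ∑ l ∈ Finset.univ.filter (fun l : Fin m => l.val + 1 < m),
              ((w v (x l)) *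
                  ((∑ j, w v j) - ∑ k ∈ Finset.univ.filter (fun k => k ≤ l), w v (x k)) /
                  (∑ j, w v j)) • elemLap (x l) (x (Q l a)))
      = lap w - (1 / (lap w v v)) •
          Matrix.vecMulVec ((lap w).mulVec (Pi.single v 1)) ((lap w).mulVec (Pi.single v 1)) := by
  classical
  set W : ℝ := ∑ j, w v j with hW
  have hW0 : W ≠ 0 := ne_of_gt hdeg
  have hxv : ∀ l, x l ≠ v := by
    intro l h
    have := hpos l
    rw [h, hdiag] at this
    exact lt_irrefl 0 this
  -- total weight over the enumeration
  have hWx : ∑ q : Fin m, w v (x q) = W := by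
    calc ∑ q : Fin m, w v (x q) = ∑ j ∈ Finset.univ.image x, w v j :=
          (Finset.sum_image (fun a _ b _ h => hinj h)).symm
      _ = ∑ j, w v j := Finset.sum_subset (Finset.subset_univ _) (fun j _ hj => by
          refine hzero j ?_
          simp only [Finset.mem_image, Finset.mem_univ, true_and, not_exists] at hj
          rintro ⟨a, rfl⟩
          exact hj a rfl)
  -- the column of the Laplacian
  have hc : (lap w).mulVec (Pi.single v 1) = ∑ l : Fin m, w v (x l) • uv v (x l) := by
    funext i
    have hL : (lap w).mulVec (Pi.single v 1) i = lap w i v := by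
      rw [Matrix.mulVec_single]
      exact mul_one _
    rw [hL]
    have hR : (∑ l : Fin m, w v (x l) • uv v (x l)) i
        = ∑ l : Fin m, w v (x l) * ((if i = v then (1:ℝ) else 0) - if i = x l then 1 else 0) := by
      simp [uv, Pi.single_apply]
    rw [hR]
    by_cases hiv : i = v
    · have h1 : ∀ l : Fin m, ((if i = v then (1:ℝ) else 0) - if i = x l then 1 else 0) = 1 :=
        fun l => by rw [if_pos hiv, if_neg (fun h => hxv l (h.symm.trans hiv)), sub_zero]
      simp only [h1, mul_one, hWx]
      simp [lap, hiv]
      exact hW.symm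
    · have h1 : ∀ l : Fin m, ((if i = v then (1:ℝ) else 0) - if i = x l then 1 else 0)
          = -(if i = x l then 1 else 0) := fun l => by rw [if_neg hiv, zero_sub]
      have hL2 : lap w i v = -(w v i) := by simp [lap, hiv, hsymm i v]
      rw [hL2]
      simp only [h1, mul_neg, mul_ite, mul_one, mul_zero]
      rw [Finset.sum_neg_distrib]
      congr 1
      by_cases hr : ∃ l0 : Fin m, x l0 = i
      · obtain ⟨l0, rfl⟩ := hr
        rw [Finset.sum_eq_single l0 (fun l _ hne => if_neg (fun h : x l0 = x l => hne (hinj h).symm))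
          (fun h => absurd (Finset.mem_univ l0) h)]
        rw [if_pos rfl]
      · rw [hzero i (fun ⟨a, ha⟩ => hr ⟨a, ha⟩)]
        exact (Finset.sum_eq_zero (fun l _ => if_neg (fun h => hr ⟨l, h.symm⟩))).symm
  -- star in terms of the enumeration
  have hstar : ∑ j, w v j • elemLap v j = ∑ l : Fin m, w v (x l) • elemLap v (x l) := by
    calc ∑ j, w v j • elemLap v j = ∑ j ∈ Finset.univ.image x, w v j • elemLap v j :=
          (Finset.sum_subset (Finset.subset_univ _) (fun j _ hj => by
            rw [hzero j (by
              simp only [Finset.mem_image, Finset.mem_univ, true_and, not_exists] at hj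
              rintro ⟨a, rfl⟩
              exact hj a rfl), zero_smul])).symm
      _ = ∑ l : Fin m, w v (x l) • elemLap v (x l) :=
          Finset.sum_image (fun a _ b _ h => hinj h)
  -- remaining weight is positive
  have hSl : ∀ l : Fin m, l.val + 1 < m →
      0 < W - ∑ k ∈ Finset.univ.filter (fun k => k ≤ l), w v (x k) := by
    intro l hl
    have hsplit := Finset.sum_filter_add_sum_filter_not Finset.univ (fun k => k ≤ l)
      (fun k => w v (x k))
    rw [hWx] at hsplit
    have : W - ∑ k ∈ Finset.univ.filter (fun k => k ≤ l), w v (x k)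
        = ∑ k ∈ Finset.univ.filter (fun k : Fin m => ¬ k ≤ l), w v (x k) := by
      linarith
    rw [this]
    apply Finset.sum_pos (fun k _ => hpos k)
    refine ⟨⟨l.val + 1, hl⟩, ?_⟩
    simp only [Finset.mem_filter, Finset.mem_univ, true_and, not_le]
    exact Fin.lt_def.mpr (Nat.lt_succ_self _)
  -- expectation of the random part
  have hB : ∑ a : Ω, p a • (∑ l ∈ Finset.univ.filter (fun l : Fin m => l.val + 1 < m),
        ((w v (x l)) * (W - ∑ k ∈ Finset.univ.filter (fun k => k ≤ l), w v (x k)) / W) •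
          elemLap (x l) (x (Q l a)))
      = ∑ l : Fin m, ∑ q ∈ Finset.univ.filter (fun q => l < q),
          (w v (x l) * w v (x q) / W) • elemLap (x l) (x q) := by
    simp only [Finset.smul_sum]
    rw [Finset.sum_comm]
    have hl1 : ∀ l ∈ Finset.univ.filter (fun l : Fin m => l.val + 1 < m),
        ∑ a : Ω, p a • (((w v (x l)) * (W - ∑ k ∈ Finset.univ.filter (fun k => k ≤ l), w v (x k)) / W) •
            elemLap (x l) (x (Q l a)))
        = ∑ q ∈ Finset.univ.filter (fun q => l < q),
            (w v (x l) * w v (x q) / W) • elemLap (x l) (x q) := by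
      intro l hlF
      have hl : l.val + 1 < m := by
        simpa using (Finset.mem_filter.mp hlF).2
      set S : ℝ := ∑ k ∈ Finset.univ.filter (fun k => k ≤ l), w v (x k) with hS
      have hWS : W - S ≠ 0 := ne_of_gt (hSl l hl)
      calc ∑ a : Ω, p a • ((w v (x l) * (W - S) / W) • elemLap (x l) (x (Q l a)))
          = ∑ a : Ω, (p a * (w v (x l) * (W - S) / W)) • elemLap (x l) (x (Q l a)) := by
            simp only [smul_smul]
        _ = ∑ q : Fin m, ∑ a ∈ Finset.univ.filter (fun a => Q l a = q),
              (p a * (w v (x l) * (W - S) / W)) • elemLap (x l) (x (Q l a)) :=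
            (Finset.sum_fiberwise _ _ _).symm
        _ = ∑ q : Fin m, ((∑ a ∈ Finset.univ.filter (fun a => Q l a = q), p a) *
              (w v (x l) * (W - S) / W)) • elemLap (x l) (x q) := by
            refine Finset.sum_congr rfl (fun q _ => ?_)
            rw [Finset.sum_mul, Finset.sum_smul]
            refine Finset.sum_congr rfl (fun a ha => ?_)
            rw [(Finset.mem_filter.mp ha).2]
        _ = ∑ q ∈ Finset.univ.filter (fun q => l < q),
              ((∑ a ∈ Finset.univ.filter (fun a => Q l a = q), p a) *
                (w v (x l) * (W - S) / W)) • elemLap (x l) (x q) := by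
            refine (Finset.sum_subset (Finset.filter_subset _ _) ?_).symm
            intro q _ hq
            simp only [Finset.mem_filter, Finset.mem_univ, true_and] at hq
            have he : Finset.univ.filter (fun a : Ω => Q l a = q) = ∅ := by
              apply Finset.filter_eq_empty_iff.mpr
              intro a _
              exact fun h => hq (h ▸ hQgt l hl a)
            rw [he]
            simp
        _ = ∑ q ∈ Finset.univ.filter (fun q => l < q),
              (w v (x l) * w v (x q) / W) • elemLap (x l) (x q) := by
            refine Finset.sum_congr rfl (fun q hq => ?_)
            have hlq : l < q := by
              simpa using (Finset.mem_filter.mp hq).2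
            rw [hQdist l hl q hlq, ← hS]
            congr 1
            field_simp
    rw [Finset.sum_congr rfl hl1]
    refine Finset.sum_subset (Finset.filter_subset _ _) ?_
    intro l _ hl
    simp only [Finset.mem_filter, Finset.mem_univ, true_and, not_lt] at hl
    apply Finset.sum_eq_zero
    intro q hq
    have h1 : l < q := by simpa using (Finset.mem_filter.mp hq).2
    have h2 : q.val < m := q.isLt
    have h3 : l.val < q.val := h1
    omega
  have hlapvv : lap w v v = W := by
    rw [hW]; simp [lap]
  have helem1 : ∀ l : Fin m, elemLap v (x l) = Matrix.vecMulVec (uv v (x l)) (uv v (x l)) :=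
    fun l => rfl
  have helem2 : ∀ l q : Fin m, elemLap (x l) (x q)
      = Matrix.vecMulVec (uv v (x q) - uv v (x l)) (uv v (x q) - uv v (x l)) := by
    intro l q
    unfold elemLap uv
    congr 1 <;> abel
  have helem_symm : ∀ i j : Fin n, elemLap i j = elemLap j i := by
    intro i j
    unfold elemLap
    ext a b
    simp only [Matrix.vecMulVec_apply, Pi.sub_apply]
    ring
  have helem_diag : ∀ i : Fin n, elemLap i i = 0 := by
    intro i
    unfold elemLap
    ext a b
    simp [Matrix.vecMulVec_apply]
  have hvmv : Matrix.vecMulVec ((lap w).mulVec (Pi.single v 1)) ((lap w).mulVec (Pi.single v 1))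
      = ∑ l : Fin m, ∑ q : Fin m,
          (w v (x l) * w v (x q)) • Matrix.vecMulVec (uv v (x l)) (uv v (x q)) := by
    rw [hc]
    ext i j
    simp only [Matrix.vecMulVec_apply, Finset.sum_apply, Pi.smul_apply, smul_eq_mul,
      Matrix.sum_apply, Matrix.smul_apply]
    rw [Finset.sum_mul_sum]
    refine Finset.sum_congr rfl fun l _ => Finset.sum_congr rfl fun q _ => ?_
    ring
  -- scalar marginals
  have hmarg : ∀ l : Fin m, ∑ q : Fin m, w v (x l) * w v (x q) / W = w v (x l) := by
    intro l
    rw [← Finset.sum_div, ← Finset.mul_sum, hWx, mul_div_assoc, div_self hW0, mul_one]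
  have hmarg' : ∀ q : Fin m, ∑ l : Fin m, w v (x l) * w v (x q) / W = w v (x q) := by
    intro q
    have : ∀ l : Fin m, w v (x l) * w v (x q) / W = w v (x q) * w v (x l) / W := by
      intro l; ring
    simp only [this]
    exact hmarg q
  -- the full double sum
  have hfull : ∑ l : Fin m, ∑ q : Fin m, (w v (x l) * w v (x q) / W) • elemLap (x l) (x q)
      = ((∑ j, w v j • elemLap v j) - (1 / W) • Matrix.vecMulVec
            ((lap w).mulVec (Pi.single v 1)) ((lap w).mulVec (Pi.single v 1)))
        + ((∑ j, w v j • elemLap v j) - (1 / W) • Matrix.vecMulVec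
            ((lap w).mulVec (Pi.single v 1)) ((lap w).mulVec (Pi.single v 1))) := by
    have hexp : ∀ l q : Fin m, (w v (x l) * w v (x q) / W) • elemLap (x l) (x q)
        = (w v (x l) * w v (x q) / W) • Matrix.vecMulVec (uv v (x q)) (uv v (x q))
          - (w v (x l) * w v (x q) / W) • Matrix.vecMulVec (uv v (x q)) (uv v (x l))
          - (w v (x l) * w v (x q) / W) • Matrix.vecMulVec (uv v (x l)) (uv v (x q))
          + (w v (x l) * w v (x q) / W) • Matrix.vecMulVec (uv v (x l)) (uv v (x l)) := by
      intro l q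
      rw [helem2, vecMulVec_sub_sub]
      module
    simp only [hexp, Finset.sum_add_distrib, Finset.sum_sub_distrib]
    have hS1 : ∑ l : Fin m, ∑ q : Fin m,
        (w v (x l) * w v (x q) / W) • Matrix.vecMulVec (uv v (x q)) (uv v (x q))
        = ∑ j, w v j • elemLap v j := by
      rw [Finset.sum_comm, hstar]
      refine Finset.sum_congr rfl fun q _ => ?_
      rw [← Finset.sum_smul, hmarg' q, helem1]
    have hS4 : ∑ l : Fin m, ∑ q : Fin m,
        (w v (x l) * w v (x q) / W) • Matrix.vecMulVec (uv v (x l)) (uv v (x l))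
        = ∑ j, w v j • elemLap v j := by
      rw [hstar]
      refine Finset.sum_congr rfl fun l _ => ?_
      rw [← Finset.sum_smul, hmarg l, helem1]
    have hS3 : ∑ l : Fin m, ∑ q : Fin m,
        (w v (x l) * w v (x q) / W) • Matrix.vecMulVec (uv v (x l)) (uv v (x q))
        = (1 / W) • Matrix.vecMulVec
            ((lap w).mulVec (Pi.single v 1)) ((lap w).mulVec (Pi.single v 1)) := by
      rw [hvmv, Finset.smul_sum]
      refine Finset.sum_congr rfl fun l _ => ?_
      rw [Finset.smul_sum]
      refine Finset.sum_congr rfl fun q _ => ?_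
      rw [smul_smul]
      congr 1
      ring
    have hS2 : ∑ l : Fin m, ∑ q : Fin m,
        (w v (x l) * w v (x q) / W) • Matrix.vecMulVec (uv v (x q)) (uv v (x l))
        = (1 / W) • Matrix.vecMulVec
            ((lap w).mulVec (Pi.single v 1)) ((lap w).mulVec (Pi.single v 1)) := by
      rw [Finset.sum_comm, ← hS3]
      refine Finset.sum_congr rfl fun q _ => Finset.sum_congr rfl fun l _ => ?_
      congr 1
      ring
    rw [hS1, hS2, hS3, hS4]
    abel
  -- pair sum identity
  have hpair : ∑ l : Fin m, ∑ q ∈ Finset.univ.filter (fun q => l < q),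
        (w v (x l) * w v (x q) / W) • elemLap (x l) (x q)
      = (∑ j, w v j • elemLap v j) - (1 / W) • Matrix.vecMulVec
          ((lap w).mulVec (Pi.single v 1)) ((lap w).mulVec (Pi.single v 1)) := by
    have hD := pair_sum_double (fun l q => (w v (x l) * w v (x q) / W) • elemLap (x l) (x q))
      (fun l q => by
        show (w v (x l) * w v (x q) / W) • elemLap (x l) (x q)
            = (w v (x q) * w v (x l) / W) • elemLap (x q) (x l)
        rw [helem_symm (x l) (x q), mul_comm (w v (x l))])
      (fun l => by
        show (w v (x l) * w v (x l) / W) • elemLap (x l) (x l) = 0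
        rw [helem_diag, smul_zero])
    rw [hfull] at hD
    have h2 : (2 : ℝ) • ((∑ j, w v j • elemLap v j) - (1 / W) • Matrix.vecMulVec
          ((lap w).mulVec (Pi.single v 1)) ((lap w).mulVec (Pi.single v 1)))
        = (2 : ℝ) • ∑ l : Fin m, ∑ q ∈ Finset.univ.filter (fun q => l < q),
            (w v (x l) * w v (x q) / W) • elemLap (x l) (x q) := by
      rw [two_smul, two_smul, hD]
    exact (smul_right_injective _ (two_ne_zero) h2).symm
  -- assemble
  simp only [smul_add]
  rw [Finset.sum_add_distrib, ← Finset.sum_smul, hp1, one_smul, hB, hpair, hlapvv]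
  abel
end

section
/- Let n ≥ 2, let w be a symmetric, nonnegative weight function on Fin n with zero diagonal, let L be the associated weighted graph Laplacian, and let v be a vertex with W(v) > 0. Then 0 ⪯ CLIQUE(v) ⪯ STAR(v) ⪯ L in the Loewner (positive semidefinite) order; that is, CLIQUE(v) is positive semidefinite, STAR(v) − CLIQUE(v) is positive semidefinite, and L − STAR(v) is positive semidefinite. -/
open Matrix BigOperators

/- ### Auxiliary lemmas -/

lemma qf_vecMulVec {n : ℕ} (u x : Fin n → ℝ) :
    x ⬝ᵥ (Matrix.vecMulVec u u) *ᵥ x = (u ⬝ᵥ x)^2 := by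
  simp only [dotProduct, Matrix.mulVec, Matrix.vecMulVec_apply, sq]
  rw [Finset.sum_mul_sum]
  simp only [Finset.mul_sum]
  congr 1; ext a; congr 1; ext b; ring

lemma single_dot {n : ℕ} (i j : Fin n) (x : Fin n → ℝ) :
    (Pi.single i 1 - Pi.single j 1 : Fin n → ℝ) ⬝ᵥ x = x i - x j := by
  simp [dotProduct, sub_mul, Finset.sum_sub_distrib, Pi.single_apply, Finset.sum_ite_eq]

lemma qf_elemLap {n : ℕ} (i j : Fin n) (x : Fin n → ℝ) :
    x ⬝ᵥ (elemLap i j) *ᵥ x = (x i - x j)^2 := by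
  rw [elemLap, qf_vecMulVec, single_dot]

lemma herm_elemLap {n : ℕ} (i j : Fin n) : (elemLap i j).IsHermitian := by
  ext a b
  simp [elemLap, Matrix.IsHermitian, Matrix.conjTranspose_apply, Matrix.vecMulVec_apply, mul_comm]

lemma qf_sum {n : ℕ} {ι : Type*} (s : Finset ι) (M : ι → Matrix (Fin n) (Fin n) ℝ)
    (x : Fin n → ℝ) :
    x ⬝ᵥ (∑ i ∈ s, M i) *ᵥ x = ∑ i ∈ s, x ⬝ᵥ (M i) *ᵥ x := by
  classical
  induction s using Finset.induction with
  | empty => simp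
  | insert _ _ h ih =>
      rw [Finset.sum_insert h, Finset.sum_insert h, Matrix.add_mulVec, dotProduct_add, ih]

lemma qf_smul {n : ℕ} (c : ℝ) (M : Matrix (Fin n) (Fin n) ℝ) (x : Fin n → ℝ) :
    x ⬝ᵥ (c • M) *ᵥ x = c * (x ⬝ᵥ M *ᵥ x) := by
  rw [Matrix.smul_mulVec, dotProduct_smul, smul_eq_mul]

lemma herm_sum {n : ℕ} {ι : Type*} (s : Finset ι) (M : ι → Matrix (Fin n) (Fin n) ℝ)
    (h : ∀ i ∈ s, (M i).IsHermitian) : (∑ i ∈ s, M i).IsHermitian := by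
  classical
  induction s using Finset.induction with
  | empty => simp [Matrix.IsHermitian]
  | insert _ _ hns ih =>
      rw [Finset.sum_insert hns]
      exact ((h _ (Finset.mem_insert_self _ _)).add
        (ih fun i hi => h i (Finset.mem_insert_of_mem hi)))

lemma herm_smul {n : ℕ} (c : ℝ) (M : Matrix (Fin n) (Fin n) ℝ) (h : M.IsHermitian) :
    (c • M).IsHermitian := by
  ext a b
  simp [Matrix.conjTranspose_apply, ← h.apply a b]

lemma key_expand {n : ℕ} (a x : Fin n → ℝ) :
    ∑ j, ∑ k, (a j * a k) * (x j - x k)^2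
      = 2 * (∑ j, a j) * (∑ j, a j * (x j)^2) - 2 * (∑ j, a j * x j)^2 := by
  have h1 : ∀ j, ∑ k, (a j * a k) * (x j - x k)^2
      = a j * (x j)^2 * (∑ k, a k) - 2 * (a j * x j) * (∑ k, a k * x k)
        + a j * (∑ k, a k * (x k)^2) := by
    intro j
    rw [Finset.mul_sum, Finset.mul_sum, Finset.mul_sum, ← Finset.sum_sub_distrib,
      ← Finset.sum_add_distrib]
    exact Finset.sum_congr rfl fun k _ => by ring
  simp_rw [h1]
  rw [Finset.sum_add_distrib, Finset.sum_sub_distrib, ← Finset.sum_mul, ← Finset.sum_mul,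
    ← Finset.sum_mul, ← Finset.mul_sum]
  ring

lemma qf_lap {n : ℕ} (w : Fin n → Fin n → ℝ)
    (hsymm : ∀ i j, w i j = w j i) (hdiag : ∀ i, w i i = 0) (x : Fin n → ℝ) :
    x ⬝ᵥ (lap w) *ᵥ x = (1/2) * ∑ i, ∑ j, w i j * (x i - x j)^2 := by
  have hmv : ∀ i, ((lap w) *ᵥ x) i = (∑ k, w i k) * x i - ∑ j, w i j * x j := by
    intro i
    have : ∀ j, (lap w) i j * x j
        = (if i = j then (∑ k, w i k) * x i else 0) - w i j * x j := by
      intro j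
      by_cases h : i = j
      · subst h; simp [lap, hdiag i]
      · simp [lap, h]
    simp only [Matrix.mulVec, dotProduct, this, Finset.sum_sub_distrib,
      Finset.sum_ite_eq, Finset.mem_univ, if_true]
  have hq : x ⬝ᵥ (lap w) *ᵥ x = ∑ i, ∑ j, (w i j * (x i)^2 - w i j * (x i * x j)) := by
    simp only [dotProduct, hmv]
    refine Finset.sum_congr rfl fun i _ => ?_
    rw [Finset.sum_sub_distrib, mul_sub, Finset.mul_sum]
    exact congrArg₂ (· - ·) (by ring_nf; rw [Finset.mul_sum]) (Finset.sum_congr rfl fun j _ => by ring)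
  have hswap : ∑ i, ∑ j, (w i j * (x j)^2 - w i j * (x i * x j))
      = ∑ i, ∑ j, (w i j * (x i)^2 - w i j * (x i * x j)) := by
    rw [Finset.sum_comm]
    refine Finset.sum_congr rfl fun i _ => Finset.sum_congr rfl fun j _ => ?_
    rw [hsymm j i]; ring
  have hfull : ∑ i, ∑ j, w i j * (x i - x j)^2
      = 2 * ∑ i, ∑ j, (w i j * (x i)^2 - w i j * (x i * x j)) := by
    have : ∀ i j, w i j * (x i - x j)^2
        = (w i j * (x i)^2 - w i j * (x i * x j)) + (w i j * (x j)^2 - w i j * (x i * x j)) := by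
      intro i j; ring
    simp_rw [this, Finset.sum_add_distrib]
    rw [hswap]; ring
  rw [hq, hfull]; ring

/-- `0 ⪯ CLIQUE(v) ⪯ STAR(v) ⪯ L` in the Loewner order. -/
theorem clique_le_star_le_lap {n : ℕ} (hn : 2 ≤ n)
    (w : Fin n → Fin n → ℝ)
    (hsymm : ∀ i j, w i j = w j i) (hnonneg : ∀ i j, 0 ≤ w i j)
    (hdiag : ∀ i, w i i = 0) (v : Fin n) (hdeg : 0 < ∑ j, w v j) :
    ((1 / (2 * ∑ j, w v j)) • ∑ j, ∑ k, (w v j * w v k) • elemLap j k).PosSemidef ∧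
    ((∑ j, (w v j) • elemLap v j)
      - (1 / (2 * ∑ j, w v j)) • ∑ j, ∑ k, (w v j * w v k) • elemLap j k).PosSemidef ∧
    (lap w - ∑ j, (w v j) • elemLap v j).PosSemidef := by
  classical
  set W : ℝ := ∑ j, w v j with hW
  have hW0 : W ≠ 0 := ne_of_gt hdeg
  -- Hermitian facts
  have hermC : ((1 / (2 * W)) • ∑ j, ∑ k, (w v j * w v k) • elemLap j k).IsHermitian :=
    herm_smul _ _ (herm_sum _ _ fun j _ => herm_sum _ _ fun k _ =>
      herm_smul _ _ (herm_elemLap j k))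
  have hermS : (∑ j : Fin n, (w v j) • elemLap v j).IsHermitian :=
    herm_sum _ _ fun j _ => herm_smul _ _ (herm_elemLap v j)
  have hermL : (lap w).IsHermitian := by
    ext a b
    simp only [lap, Matrix.conjTranspose_apply, Matrix.of_apply, star_trivial]
    by_cases h : a = b
    · subst h; simp
    · rw [if_neg (fun hh => h hh.symm), if_neg h, hsymm]
  -- quadratic forms
  have qfC : ∀ x : Fin n → ℝ,
      x ⬝ᵥ ((1 / (2 * W)) • ∑ j, ∑ k, (w v j * w v k) • elemLap j k) *ᵥ x
        = (1 / (2 * W)) * ∑ j, ∑ k, (w v j * w v k) * (x j - x k)^2 := by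
    intro x
    rw [qf_smul, qf_sum]
    congr 1
    refine Finset.sum_congr rfl fun j _ => ?_
    rw [qf_sum]
    exact Finset.sum_congr rfl fun k _ => by rw [qf_smul, qf_elemLap]
  have qfS : ∀ x : Fin n → ℝ,
      x ⬝ᵥ (∑ j, (w v j) • elemLap v j) *ᵥ x = ∑ j, w v j * (x v - x j)^2 := by
    intro x
    rw [qf_sum]
    exact Finset.sum_congr rfl fun j _ => by rw [qf_smul, qf_elemLap]
  -- clique quadratic form simplified
  have qfC' : ∀ x : Fin n → ℝ,
      x ⬝ᵥ ((1 / (2 * W)) • ∑ j, ∑ k, (w v j * w v k) • elemLap j k) *ᵥ x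
        = (∑ j, w v j * (x j)^2) - (∑ j, w v j * x j)^2 / W := by
    intro x
    rw [qfC x, key_expand (w v) x, ← hW]
    field_simp
  refine ⟨posSemidef_iff_dotProduct_mulVec.mpr ⟨hermC, ?_⟩,
    posSemidef_iff_dotProduct_mulVec.mpr ⟨hermS.sub hermC, ?_⟩,
    posSemidef_iff_dotProduct_mulVec.mpr ⟨hermL.sub hermS, ?_⟩⟩
  · intro x
    simp only [star_trivial]
    rw [qfC]
    apply mul_nonneg
    · positivity
    · exact Finset.sum_nonneg fun j _ => Finset.sum_nonneg fun k _ =>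
        mul_nonneg (mul_nonneg (hnonneg v j) (hnonneg v k)) (sq_nonneg _)
  · intro x
    simp only [star_trivial]
    rw [Matrix.sub_mulVec, dotProduct_sub, qfS x, qfC' x]
    have hQS : ∑ j, w v j * (x v - x j)^2
        = W * (x v)^2 - 2 * x v * (∑ j, w v j * x j) + (∑ j, w v j * (x j)^2) := by
      have : ∀ j, w v j * (x v - x j)^2
          = w v j * (x v)^2 - 2 * x v * (w v j * x j) + w v j * (x j)^2 := fun j => by ring
      simp_rw [this, Finset.sum_add_distrib, Finset.sum_sub_distrib, ← Finset.sum_mul,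
        ← Finset.mul_sum]
      rfl
    rw [hQS]
    have key : W * (x v)^2 - 2 * x v * (∑ j, w v j * x j) + (∑ j, w v j * (x j)^2)
        - ((∑ j, w v j * (x j)^2) - (∑ j, w v j * x j)^2 / W)
        = (W * x v - (∑ j, w v j * x j))^2 / W := by
      field_simp
      ring
    rw [key]
    positivity
  · intro x
    simp only [star_trivial]
    rw [Matrix.sub_mulVec, dotProduct_sub, qfS x, qf_lap w hsymm hdiag x]
    set F : Fin n → Fin n → ℝ := fun i j => w i j * (x i - x j)^2 with hF
    have hF0 : ∀ i j, 0 ≤ F i j := fun i j => mul_nonneg (hnonneg i j) (sq_nonneg _)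
    have hFsymm : ∀ i j, F i j = F j i := fun i j => by
      simp only [hF]; rw [hsymm i j]; ring_nf
    have hstep : 2 * (∑ j, F v j) ≤ ∑ i, ∑ j, F i j := by
      have hsplit : ∑ i, ∑ j, F i j
          = (∑ j, F v j) + ∑ i ∈ Finset.univ.erase v, ∑ j, F i j :=
        (Finset.add_sum_erase _ _ (Finset.mem_univ v)).symm
      have hlow : ∑ i ∈ Finset.univ.erase v, F i v
          ≤ ∑ i ∈ Finset.univ.erase v, ∑ j, F i j :=
        Finset.sum_le_sum fun i _ =>
          Finset.single_le_sum (fun j _ => hF0 i j) (Finset.mem_univ v)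
      have herase : ∑ i ∈ Finset.univ.erase v, F i v = ∑ j, F v j := by
        rw [Finset.sum_erase_eq_sub (Finset.mem_univ v)]
        have : F v v = 0 := by simp [hF]
        rw [this, sub_zero]
        exact Finset.sum_congr rfl fun i _ => hFsymm i v
      calc 2 * (∑ j, F v j) = (∑ j, F v j) + ∑ i ∈ Finset.univ.erase v, F i v := by
            rw [herase]; ring
        _ ≤ (∑ j, F v j) + ∑ i ∈ Finset.univ.erase v, ∑ j, F i j := by linarith
        _ = ∑ i, ∑ j, F i j := hsplit.symm
    linarith
end

section
/- Let n ≥ 2 and let w be a symmetric, nonnegative weight function on Fin n with zero diagonal and Laplacian L, such that every vertex has positive weighted degree (W(v) > 0 for all v). Then the expected clique under a uniformly random vertex is dominated by (2/n) L in the Loewner order; equivalently, 2 • L − ∑ over v in Fin n of CLIQUE(v) is positive semidefinite. -/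
open Matrix BigOperators

section helpers

variable {n : ℕ}

/-- quadratic form commutes with finite sums of matrices -/
lemma quad_sum {ι : Type*} (s : Finset ι) (A : ι → Matrix (Fin n) (Fin n) ℝ)
    (x : Fin n → ℝ) :
    x ⬝ᵥ ((∑ v ∈ s, A v) *ᵥ x) = ∑ v ∈ s, x ⬝ᵥ (A v *ᵥ x) := by
  classical
  induction s using Finset.induction_on with
  | empty => simp [Matrix.zero_mulVec]
  | insert _ _ h ih =>
    rw [Finset.sum_insert h, Finset.sum_insert h, Matrix.add_mulVec, dotProduct_add, ih]

lemma elemLap_apply (i j a b : Fin n) :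
    elemLap i j a b = ((Pi.single i 1 - Pi.single j 1 : Fin n → ℝ) a)
      * ((Pi.single i 1 - Pi.single j 1 : Fin n → ℝ) b) := rfl

lemma quad_elemLap (i j : Fin n) (x : Fin n → ℝ) :
    x ⬝ᵥ (elemLap i j *ᵥ x) = (x i - x j) ^ 2 := by
  classical
  have hu : ∀ y : Fin n → ℝ,
      (∑ k, ((Pi.single i 1 - Pi.single j 1 : Fin n → ℝ) k) * y k) = y i - y j := by
    intro y
    simp [Pi.sub_apply, sub_mul, Finset.sum_sub_distrib, Pi.single_apply,
      Finset.sum_ite_eq', ite_mul]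
  have : ∀ a, (elemLap i j *ᵥ x) a
      = ((Pi.single i 1 - Pi.single j 1 : Fin n → ℝ) a) * (x i - x j) := by
    intro a
    simp only [Matrix.mulVec, dotProduct, elemLap_apply, mul_assoc, ← Finset.mul_sum]
    rw [hu]
  simp only [dotProduct, this]
  have := hu x
  calc (∑ a, x a * (((Pi.single i 1 - Pi.single j 1 : Fin n → ℝ) a) * (x i - x j)))
      = (∑ a, ((Pi.single i 1 - Pi.single j 1 : Fin n → ℝ) a) * x a) * (x i - x j) := by
        rw [Finset.sum_mul]; congr 1; ext a; ring
    _ = (x i - x j) ^ 2 := by rw [hu x]; ring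

lemma quad_lap (w : Fin n → Fin n → ℝ) (hdiag : ∀ i, w i i = 0) (x : Fin n → ℝ) :
    x ⬝ᵥ (lap w *ᵥ x)
      = ∑ v, ((∑ j, w v j) * x v ^ 2 - x v * ∑ j, w v j * x j) := by
  classical
  have hrow : ∀ i, (lap w *ᵥ x) i = (∑ k, w i k) * x i - ∑ j, w i j * x j := by
    intro i
    simp only [Matrix.mulVec, dotProduct, lap, Matrix.of_apply]
    have hterm : ∀ j, (if i = j then (∑ k, w i k) else -(w i j)) * x j
        = (if i = j then ((∑ k, w i k) + w i j) * x j else 0) - w i j * x j := by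
      intro j; by_cases h : i = j <;> simp [h] <;> ring
    rw [Finset.sum_congr rfl (fun j _ => hterm j), Finset.sum_sub_distrib,
      Finset.sum_ite_eq _ i (fun j => ((∑ k, w i k) + w i j) * x j)]
    simp [hdiag i]
  simp only [dotProduct, hrow]
  congr 1; ext v; ring

end helpers

/-- The expected clique under a uniform random vertex is dominated by `(2/n) L`:
equivalently `∑ v, CLIQUE(v) ⪯ 2 • L`. -/
theorem sum_clique_le_two_smul_lap {n : ℕ} (hn : 2 ≤ n)
    (w : Fin n → Fin n → ℝ)
    (hsymm : ∀ i j, w i j = w j i) (hnonneg : ∀ i j, 0 ≤ w i j)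
    (hdiag : ∀ i, w i i = 0) (hdeg : ∀ v : Fin n, 0 < ∑ j, w v j) :
    ((2 : ℝ) • lap w
      - ∑ v : Fin n, (1 / (2 * ∑ j, w v j)) •
          ∑ j, ∑ k, (w v j * w v k) • elemLap j k).PosSemidef := by
  classical
  set W : Fin n → ℝ := fun v => ∑ j, w v j with hWdef
  rw [Matrix.posSemidef_iff_dotProduct_mulVec]
  constructor
  · -- Hermitian part
    show _ᴴ = _
    ext i j
    have h1 : lap w j i = lap w i j := by
      by_cases h : i = j
      · subst h; rfl
      · simp [lap, h, Ne.symm h, hsymm i j]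
    have h2 : ∀ (a b : Fin n), elemLap a b j i = elemLap a b i j := by
      intro a b; simp only [elemLap_apply]; ring
    simp only [Matrix.conjTranspose_apply, Matrix.sub_apply, Matrix.smul_apply,
      Matrix.sum_apply, smul_eq_mul, star_trivial, h1]
    simp_rw [h2]
  · intro x
    simp only [star_trivial]
    set S1 : Fin n → ℝ := fun v => ∑ j, w v j * x j with hS1
    set S2 : Fin n → ℝ := fun v => ∑ j, w v j * x j ^ 2 with hS2
    have hinner : ∀ v, ∑ j, ∑ k, (w v j * w v k) * (x j - x k) ^ 2
        = 2 * W v * S2 v - 2 * S1 v ^ 2 := by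
      intro v
      calc ∑ j, ∑ k, (w v j * w v k) * (x j - x k) ^ 2
          = ∑ j, ∑ k, ((w v j * x j ^ 2) * w v k
              - 2 * ((w v j * x j) * (w v k * x k)) + w v j * (w v k * x k ^ 2)) := by
            refine Finset.sum_congr rfl fun j _ => Finset.sum_congr rfl fun k _ => by ring
        _ = (∑ j, ∑ k, (w v j * x j ^ 2) * w v k)
              - 2 * (∑ j, ∑ k, (w v j * x j) * (w v k * x k))
              + (∑ j, ∑ k, w v j * (w v k * x k ^ 2)) := by
            simp [Finset.sum_add_distrib, Finset.sum_sub_distrib, Finset.mul_sum]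
        _ = S2 v * W v - 2 * (S1 v * S1 v) + W v * S2 v := by
            rw [← Finset.sum_mul_sum, ← Finset.sum_mul_sum, ← Finset.sum_mul_sum]
        _ = 2 * W v * S2 v - 2 * S1 v ^ 2 := by ring
    have hcl : ∀ v : Fin n,
        x ⬝ᵥ (((1 / (2 * W v)) • ∑ j, ∑ k, (w v j * w v k) • elemLap j k) *ᵥ x)
          = (1 / (2 * W v)) * (2 * W v * S2 v - 2 * S1 v ^ 2) := by
      intro v
      rw [Matrix.smul_mulVec, dotProduct_smul, quad_sum]
      rw [Finset.sum_congr rfl fun j _ => quad_sum Finset.univ _ x]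
      have : ∀ j k : Fin n, x ⬝ᵥ (((w v j * w v k) • elemLap j k) *ᵥ x)
          = (w v j * w v k) * (x j - x k) ^ 2 := by
        intro j k
        rw [Matrix.smul_mulVec, dotProduct_smul, quad_elemLap]
        simp
      rw [Finset.sum_congr rfl fun j _ => Finset.sum_congr rfl fun k _ => this j k,
        hinner v]
      simp
    have hswap : ∑ v, W v * x v ^ 2 = ∑ v, S2 v := by
      calc ∑ v, W v * x v ^ 2 = ∑ v, ∑ j, w v j * x v ^ 2 := by
            simp [hWdef, Finset.sum_mul]
        _ = ∑ j, ∑ v, w v j * x v ^ 2 := Finset.sum_comm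
        _ = ∑ v, S2 v := by
            refine Finset.sum_congr rfl fun a _ => Finset.sum_congr rfl fun b _ => by
              rw [hsymm]
    rw [Matrix.sub_mulVec, dotProduct_sub, Matrix.smul_mulVec, dotProduct_smul,
      quad_sum, Finset.sum_congr rfl fun v _ => hcl v, quad_lap w hdiag x]
    have hL : (2 : ℝ) • (∑ v, (W v * x v ^ 2 - x v * S1 v))
        = ∑ v, (W v * x v ^ 2 - 2 * x v * S1 v + S2 v) := by
      calc (2 : ℝ) • (∑ v, (W v * x v ^ 2 - x v * S1 v))
          = ∑ v, ((W v * x v ^ 2 - 2 * x v * S1 v) + W v * x v ^ 2) := by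
            rw [smul_eq_mul, Finset.mul_sum]
            exact Finset.sum_congr rfl fun v _ => by ring
        _ = (∑ v, (W v * x v ^ 2 - 2 * x v * S1 v)) + ∑ v, W v * x v ^ 2 := by
            rw [Finset.sum_add_distrib]
        _ = ∑ v, (W v * x v ^ 2 - 2 * x v * S1 v + S2 v) := by
            rw [hswap, ← Finset.sum_add_distrib]
    rw [hL, ← Finset.sum_sub_distrib]
    refine Finset.sum_nonneg fun v _ => ?_
    have hWv : (0 : ℝ) < W v := hdeg v
    have key : W v * x v ^ 2 - 2 * x v * S1 v + S2 v
        - 1 / (2 * W v) * (2 * W v * S2 v - 2 * S1 v ^ 2)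
        = (W v * x v - S1 v) ^ 2 / W v := by
      field_simp
      ring
    rw [key]
    positivity
end

section
/- Matrix Bernstein semidefinite bound: let U be a real symmetric n×n matrix whose operator norm (equivalently, whose eigenvalues in absolute value) is at most B, and let θ be a real number with B·|θ| < 3. Then exp(θ • U) ⪯ I + θ • U + (θ²/(2·(1 − B·|θ|/3))) • U²; that is, I + θ • U + (θ²/(2·(1 − B·|θ|/3))) • U² − exp(θ • U) is positive semidefinite, where exp denotes the matrix exponential. -/
open Matrix BigOperators


lemma factorial_ge (k : ℕ) : (2 * 3 ^ k : ℝ) ≤ (k + 2).factorial := by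
  induction k with
  | zero => norm_num
  | succ k ih =>
    have h3 : (3:ℝ) ≤ (k + 3) := by push_cast; linarith
    calc (2 * 3 ^ (k+1) : ℝ) = 3 * (2 * 3 ^ k) := by ring
    _ ≤ (k + 3) * (k + 2).factorial := by
        apply mul_le_mul h3 ih (by positivity) (by positivity)
    _ = ((k + 1) + 2).factorial := by
        have h : ((k+1)+2).factorial = (k+3) * (k+2).factorial := by
          rw [show (k+1)+2 = (k+2)+1 from rfl, Nat.factorial_succ]
        rw [h]; push_cast; ring

lemma scalar_bound {x c : ℝ} (hx : |x| ≤ c) (hc : c < 3) :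
    Real.exp x ≤ 1 + x + x ^ 2 / (2 * (1 - c / 3)) := by
  have hc0 : 0 ≤ c := le_trans (abs_nonneg x) hx
  have hr : c / 3 < 1 := by linarith
  have hr0 : 0 ≤ c / 3 := by linarith
  have hsum : Summable (fun k : ℕ => x ^ k / k.factorial) :=
    Real.summable_pow_div_factorial x
  have hexp : Real.exp x = ∑' k : ℕ, x ^ k / k.factorial := by
    rw [Real.exp_eq_exp_ℝ, NormedSpace.exp_eq_tsum_div]
  have hsum2 : Summable (fun k : ℕ => x ^ (k + 2) / (k + 2).factorial) := by
    simpa using ((summable_nat_add_iff 2).mpr hsum)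
  have hsplit : (∑' k : ℕ, x ^ k / k.factorial)
      = 1 + x + ∑' k : ℕ, x ^ (k + 2) / (k + 2).factorial := by
    rw [Summable.tsum_eq_zero_add hsum, Summable.tsum_eq_zero_add ((summable_nat_add_iff 1).mpr hsum)]
    simp [add_assoc]
  have hterm : ∀ k : ℕ, x ^ (k + 2) / (k + 2).factorial ≤ x ^ 2 / 2 * (c / 3) ^ k := by
    intro k
    have h1 : x ^ (k + 2) ≤ x ^ 2 * c ^ k := by
      calc x ^ (k + 2) ≤ |x ^ (k + 2)| := le_abs_self _
      _ = |x| ^ 2 * |x| ^ k := by rw [abs_pow, pow_add]; try ring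
      _ ≤ |x| ^ 2 * c ^ k := by
          gcongr
      _ = x ^ 2 * c ^ k := by rw [sq_abs]
    have h2 : (2 * 3 ^ k : ℝ) ≤ (k + 2).factorial := factorial_ge k
    have h3 : (0:ℝ) < 2 * 3 ^ k := by positivity
    calc x ^ (k + 2) / (k + 2).factorial ≤ (x ^ 2 * c ^ k) / (2 * 3 ^ k) := by
          rcases le_or_gt (x ^ (k+2)) 0 with h | h
          · exact le_trans (div_nonpos_of_nonpos_of_nonneg h (by positivity)) (by positivity)
          · exact div_le_div₀ (by positivity) h1 h3 h2
    _ = x ^ 2 / 2 * (c / 3) ^ k := by rw [div_pow]; ring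
  have hgeom : Summable (fun k : ℕ => x ^ 2 / 2 * (c / 3) ^ k) :=
    (summable_geometric_of_lt_one hr0 hr).mul_left _
  have : (∑' k : ℕ, x ^ (k + 2) / (k + 2).factorial)
      ≤ ∑' k : ℕ, x ^ 2 / 2 * (c / 3) ^ k := Summable.tsum_le_tsum hterm hsum2 hgeom
  rw [tsum_mul_left, tsum_geometric_of_lt_one hr0 hr] at this
  rw [hexp, hsplit]
  have : x ^ 2 / 2 * (1 - c / 3)⁻¹ = x ^ 2 / (2 * (1 - c / 3)) := by
    field_simp; try ring
  linarith [this ▸ ‹(∑' k : ℕ, x ^ (k + 2) / (k + 2).factorial) ≤ x ^ 2 / 2 * (1 - c / 3)⁻¹›]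

/-- Matrix Bernstein semidefinite bound: if the symmetric matrix `U` has all eigenvalues in
`[−B, B]` and `B·|θ| < 3`, then
`exp(θ • U) ⪯ I + θ • U + (θ²/(2(1 − B|θ|/3))) • U²`. -/
theorem matrix_bernstein_psd_bound {n : ℕ} (U : Matrix (Fin n) (Fin n) ℝ) (B θ : ℝ)
    (hU : U.IsSymm)
    (hB₁ : (B • (1 : Matrix (Fin n) (Fin n) ℝ) - U).PosSemidef)
    (hB₂ : (B • (1 : Matrix (Fin n) (Fin n) ℝ) + U).PosSemidef)
    (hθ : B * |θ| < 3) :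
    ((1 : Matrix (Fin n) (Fin n) ℝ) + θ • U
        + (θ ^ 2 / (2 * (1 - B * |θ| / 3))) • (U ^ 2)
      - NormedSpace.exp (θ • U)).PosSemidef := by
  classical
  have hH : U.IsHermitian := by
    rw [Matrix.IsHermitian]
    simpa using hU.eq
  set lam : Fin n → ℝ := hH.eigenvalues with hlamdef
  set V : Matrix (Fin n) (Fin n) ℝ := (hH.eigenvectorUnitary : Matrix (Fin n) (Fin n) ℝ) with hVdef
  have hVV : V * star V = 1 := (Matrix.mem_unitaryGroup_iff).mp hH.eigenvectorUnitary.2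
  have hsVV : star V * V = 1 := (Matrix.mem_unitaryGroup_iff').mp hH.eigenvectorUnitary.2
  have hVunit : IsUnit V :=
    @isUnit_of_invertible _ _ V (invertibleOfRightInverse _ _ hVV)
  have hVinv : V⁻¹ = star V := Matrix.inv_eq_right_inv hVV
  have hofReal : (RCLike.ofReal ∘ lam : Fin n → ℝ) = lam := by
    funext i; simp [RCLike.ofReal]
  have hspec : U = V * diagonal lam * star V := by
    conv_lhs => rw [hH.spectral_theorem]
    rw [hofReal]
    rfl
  -- eigenvalue bounds
  have hlam : ∀ i, |lam i| ≤ B := by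
    intro i
    set v : Fin n → ℝ := ⇑(hH.eigenvectorBasis i) with hv
    have hUv : U *ᵥ v = lam i • v := hH.mulVec_eigenvectorBasis i
    have hvv : v ⬝ᵥ v = 1 := by
      have h1 : ‖hH.eigenvectorBasis i‖ = 1 := hH.eigenvectorBasis.orthonormal.1 i
      have h2 : (inner (𝕜 := ℝ) (hH.eigenvectorBasis i) (hH.eigenvectorBasis i) : ℝ) = 1 := by
        rw [real_inner_self_eq_norm_mul_norm, h1, one_mul]
      rw [← h2, PiLp.inner_apply]; simp [dotProduct, hv, pow_two]
    have q1 := hB₁.dotProduct_mulVec_nonneg v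
    have q2 := hB₂.dotProduct_mulVec_nonneg v
    simp only [Matrix.sub_mulVec, Matrix.add_mulVec, Matrix.smul_mulVec,
      Matrix.one_mulVec, hUv, dotProduct_sub, dotProduct_add,
      dotProduct_smul, hvv, star_trivial, smul_eq_mul, mul_one] at q1 q2
    rw [abs_le]; constructor <;> linarith
  set c : ℝ := θ ^ 2 / (2 * (1 - B * |θ| / 3)) with hc
  set g : Fin n → ℝ := fun i =>
    1 + θ * lam i + c * (lam i) ^ 2 - Real.exp (θ * lam i) with hg
  have hgnn : ∀ i, 0 ≤ g i := by
    intro i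
    have habs : |θ * lam i| ≤ B * |θ| := by
      rw [abs_mul, mul_comm]
      exact mul_le_mul_of_nonneg_right (hlam i) (abs_nonneg θ)
    have := scalar_bound habs hθ
    have hsq : (θ * lam i) ^ 2 = θ ^ 2 * (lam i) ^ 2 := by ring
    simp only [hg]
    rw [hsq] at this
    have : Real.exp (θ * lam i) ≤ 1 + θ * lam i + c * lam i ^ 2 := by
      rw [hc]
      calc Real.exp (θ * lam i) ≤ 1 + θ * lam i + θ ^ 2 * lam i ^ 2 / (2 * (1 - B * |θ| / 3)) := this
      _ = 1 + θ * lam i + θ ^ 2 / (2 * (1 - B * |θ| / 3)) * lam i ^ 2 := by ring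
    linarith
  -- representations as conjugations
  have h1 : (1 : Matrix (Fin n) (Fin n) ℝ) = V * 1 * star V := by
    rw [Matrix.mul_one, hVV]
  have h2 : θ • U = V * (θ • diagonal lam) * star V := by
    rw [hspec, Matrix.mul_smul, Matrix.smul_mul]
  have h3 : U ^ 2 = V * (diagonal lam * diagonal lam) * star V := by
    conv_lhs => rw [pow_two, hspec]
    simp only [Matrix.mul_assoc]
    rw [← Matrix.mul_assoc (star V) V, hsVV, Matrix.one_mul]
  have h4 : NormedSpace.exp (θ • U) =
      V * diagonal (fun i => Real.exp (θ * lam i)) * star V := by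
    rw [h2, ← hVinv, Matrix.exp_conj V (θ • diagonal lam) hVunit, hVinv]
    congr 2
    rw [← Matrix.diagonal_smul, Matrix.exp_diagonal, Pi.exp_def, ← Real.exp_eq_exp_ℝ]
    congr 1
  have hdiag : diagonal g =
      1 + θ • diagonal lam + c • (diagonal lam * diagonal lam)
        - diagonal (fun i => Real.exp (θ * lam i)) := by
    rw [Matrix.diagonal_mul_diagonal]
    ext i j
    rcases eq_or_ne i j with rfl | hij
    · simp [Matrix.diagonal_apply_eq, Matrix.one_apply_eq, hg, pow_two]
    · simp [Matrix.diagonal_apply_ne _ hij, Matrix.one_apply_ne hij]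
  have key : V * diagonal g * star V = (1 : Matrix (Fin n) (Fin n) ℝ) + θ • U + c • U ^ 2
      - NormedSpace.exp (θ • U) := by
    rw [hdiag]
    simp only [Matrix.mul_add, Matrix.add_mul, Matrix.mul_sub, Matrix.sub_mul,
      Matrix.mul_smul, Matrix.smul_mul]
    rw [Matrix.mul_one, hVV, ← hspec, ← h3, ← h4]
  rw [← key]
  have : (diagonal g).PosSemidef := Matrix.posSemidef_diagonal_iff.mpr hgnn
  simpa [Matrix.star_eq_conjTranspose] using this.mul_mul_conjTranspose_same V
end

section
/- Bernstein corrector in expectation: let (Ω, p) be a finite probability space and U : Ω → (real symmetric n×n matrices) such that ∑ ω, p ω • U ω = 0 (mean zero) and, for every ω, all eigenvalues of U ω lie in [−B, B] (both B • I − U ω and B • I + U ω are positive semidefinite). Then for every real θ with B·|θ| < 3, ∑ ω, p ω • exp(θ • U ω) ⪯ exp((θ²/(2·(1 − B·|θ|/3))) • (∑ ω, p ω • (U ω)²)), where exp denotes the matrix exponential and ⪯ the positive semidefinite (Loewner) order. -/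
open Matrix BigOperators

private lemma bern_fact_ge (k : ℕ) : 2 * 3 ^ k ≤ Nat.factorial (k + 2) := by
  induction k with
  | zero => simp [Nat.factorial]
  | succ k ih =>
    have h : Nat.factorial (k + 3) = (k + 3) * Nat.factorial (k + 2) := rfl
    rw [h]
    calc 2 * 3 ^ (k+1) = 3 * (2 * 3 ^ k) := by ring
    _ ≤ 3 * Nat.factorial (k + 2) := by omega
    _ ≤ (k + 3) * Nat.factorial (k + 2) := Nat.mul_le_mul_right _ (by omega)

private lemma bern_exp_le_quad (y : ℝ) (hy : |y| < 3) :
    Real.exp y ≤ 1 + y + y ^ 2 / (2 * (1 - |y| / 3)) := by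
  have hsum : Summable (fun n : ℕ => y ^ n / n.factorial) := by
    simpa [div_eq_mul_inv, mul_comm] using Real.summable_pow_div_factorial y
  have hexp : Real.exp y = ∑' n : ℕ, y ^ n / n.factorial := by
    rw [Real.exp_eq_exp_ℝ, NormedSpace.exp_eq_tsum_div]
  have hr : |y| / 3 < 1 := by linarith
  have hr0 : 0 ≤ |y| / 3 := by positivity
  have hgeo : Summable (fun k : ℕ => y ^ 2 / 2 * (|y| / 3) ^ k) :=
    (summable_geometric_of_lt_one hr0 hr).mul_left _
  have hsum2 : Summable (fun k : ℕ => y ^ (k + 2) / (k + 2).factorial) :=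
    (summable_nat_add_iff 2).mpr hsum
  have hterm : ∀ k : ℕ, y ^ (k + 2) / (k + 2).factorial ≤ y ^ 2 / 2 * (|y| / 3) ^ k := by
    intro k
    have h1 : y ^ (k + 2) ≤ |y| ^ (k + 2) := by
      calc y ^ (k + 2) ≤ |y ^ (k + 2)| := le_abs_self _
      _ = |y| ^ (k + 2) := abs_pow y _
    have h2 : (0:ℝ) < (k + 2).factorial := by positivity
    have h3 : (2:ℝ) * 3 ^ k ≤ (k + 2).factorial := by exact_mod_cast bern_fact_ge k
    have h4 : |y| ^ (k + 2) / (k + 2).factorial ≤ |y| ^ (k + 2) / (2 * 3 ^ k) := by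
      apply div_le_div_of_nonneg_left (by positivity) (by positivity) h3
    calc y ^ (k + 2) / (k + 2).factorial ≤ |y| ^ (k + 2) / (k + 2).factorial :=
        div_le_div_of_nonneg_right h1 h2.le
    _ ≤ |y| ^ (k + 2) / (2 * 3 ^ k) := h4
    _ = y ^ 2 / 2 * (|y| / 3) ^ k := by
        rw [pow_add, div_pow, ← sq_abs y]
        field_simp
  have hsplit : (∑' n : ℕ, y ^ n / n.factorial)
      = 1 + y + ∑' k : ℕ, y ^ (k + 2) / (k + 2).factorial := by
    rw [Summable.tsum_eq_zero_add hsum, Summable.tsum_eq_zero_add ((summable_nat_add_iff 1).mpr hsum)]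
    norm_num [Nat.factorial]
    ring
  have hle : (∑' k : ℕ, y ^ (k + 2) / (k + 2).factorial)
      ≤ y ^ 2 / 2 * (1 - |y| / 3)⁻¹ := by
    calc _ ≤ ∑' k : ℕ, y ^ 2 / 2 * (|y| / 3) ^ k := Summable.tsum_le_tsum hterm hsum2 hgeo
    _ = y ^ 2 / 2 * (1 - |y| / 3)⁻¹ := by
        rw [tsum_mul_left, tsum_geometric_of_lt_one hr0 hr]
  have heq : y ^ 2 / 2 * (1 - |y| / 3)⁻¹ = y ^ 2 / (2 * (1 - |y| / 3)) := by
    field_simp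
  rw [hexp, hsplit]
  linarith [hle, heq]

section MatrixPart

variable {n : ℕ}

private noncomputable def bernConj {A : Matrix (Fin n) (Fin n) ℝ} (hA : A.IsHermitian)
    (d : Fin n → ℝ) : Matrix (Fin n) (Fin n) ℝ :=
  (hA.eigenvectorUnitary : Matrix (Fin n) (Fin n) ℝ) * diagonal d
    * star (hA.eigenvectorUnitary : Matrix (Fin n) (Fin n) ℝ)

variable {A : Matrix (Fin n) (Fin n) ℝ} (hA : A.IsHermitian)

private lemma bern_V_star_V : star (hA.eigenvectorUnitary : Matrix (Fin n) (Fin n) ℝ) *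
    (hA.eigenvectorUnitary : Matrix (Fin n) (Fin n) ℝ) = 1 :=
  Matrix.mem_unitaryGroup_iff'.mp hA.eigenvectorUnitary.2

private lemma bern_V_V_star : (hA.eigenvectorUnitary : Matrix (Fin n) (Fin n) ℝ) *
    star (hA.eigenvectorUnitary : Matrix (Fin n) (Fin n) ℝ) = 1 :=
  Matrix.mem_unitaryGroup_iff.mp hA.eigenvectorUnitary.2

private lemma bernConj_add (d e : Fin n → ℝ) :
    bernConj hA d + bernConj hA e = bernConj hA (d + e) := by
  have hd : diagonal (d + e) = diagonal d + diagonal e := by rw [diagonal_add]; rfl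
  simp only [bernConj]
  rw [hd, Matrix.mul_add, Matrix.add_mul]

private lemma bernConj_sub (d e : Fin n → ℝ) :
    bernConj hA d - bernConj hA e = bernConj hA (d - e) := by
  have hd : diagonal (d - e) = diagonal d - diagonal e := by rw [diagonal_sub]; rfl
  simp only [bernConj]
  rw [hd, Matrix.mul_sub, Matrix.sub_mul]

private lemma bernConj_mul (d e : Fin n → ℝ) :
    bernConj hA d * bernConj hA e = bernConj hA (d * e) := by
  simp only [bernConj, Matrix.mul_assoc]
  rw [← Matrix.mul_assoc (star (hA.eigenvectorUnitary : Matrix (Fin n) (Fin n) ℝ)),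
    bern_V_star_V hA, Matrix.one_mul, ← Matrix.mul_assoc (diagonal d), diagonal_mul_diagonal]
  rfl

private lemma bernConj_one : bernConj hA 1 = 1 := by
  have h : diagonal (1 : Fin n → ℝ) = (1 : Matrix (Fin n) (Fin n) ℝ) := diagonal_one
  rw [bernConj, h, Matrix.mul_one]
  exact bern_V_V_star hA

private lemma bernConj_smul (c : ℝ) (d : Fin n → ℝ) :
    c • bernConj hA d = bernConj hA (c • d) := by
  simp [bernConj, diagonal_smul, Matrix.smul_mul, Matrix.mul_smul]

private lemma bernConj_eig : bernConj hA (hA.eigenvalues) = A := by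
  have h := hA.spectral_theorem
  rw [Unitary.conjStarAlgAut_apply] at h
  simp only [bernConj]
  exact h.symm

private lemma bernConj_psd {d : Fin n → ℝ} (hd : ∀ i, 0 ≤ d i) :
    (bernConj hA d).PosSemidef := by
  have h1 : (diagonal d).PosSemidef := Matrix.PosSemidef.diagonal hd
  have h2 := h1.mul_mul_conjTranspose_same (hA.eigenvectorUnitary : Matrix (Fin n) (Fin n) ℝ)
  simpa [bernConj, Matrix.star_eq_conjTranspose, Matrix.mul_assoc] using h2

private lemma bernConj_exp :
    NormedSpace.exp A = bernConj hA (fun i => Real.exp (hA.eigenvalues i)) := by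
  have hu : IsUnit (hA.eigenvectorUnitary : Matrix (Fin n) (Fin n) ℝ) :=
    ⟨⟨_, star (hA.eigenvectorUnitary : Matrix (Fin n) (Fin n) ℝ),
      bern_V_V_star hA, bern_V_star_V hA⟩, rfl⟩
  have hinv : (hA.eigenvectorUnitary : Matrix (Fin n) (Fin n) ℝ)⁻¹
      = star (hA.eigenvectorUnitary : Matrix (Fin n) (Fin n) ℝ) :=
    inv_eq_left_inv (bern_V_star_V hA)
  conv_lhs => rw [hA.spectral_theorem, Unitary.conjStarAlgAut_apply]
  rw [show (diagonal (RCLike.ofReal ∘ hA.eigenvalues) : Matrix (Fin n) (Fin n) ℝ)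
      = diagonal hA.eigenvalues by simp [Function.comp], ← hinv,
    Matrix.exp_conj _ _ hu, Matrix.exp_diagonal, hinv]
  simp only [bernConj]
  congr 2
  rw [Pi.exp_def]
  ext i
  rw [Real.exp_eq_exp_ℝ]

private lemma bern_eig_abs_le {M : Matrix (Fin n) (Fin n) ℝ} (hM : M.IsHermitian) {b : ℝ}
    (h1 : (b • (1 : Matrix (Fin n) (Fin n) ℝ) - M).PosSemidef)
    (h2 : (b • (1 : Matrix (Fin n) (Fin n) ℝ) + M).PosSemidef) (i : Fin n) :
    |hM.eigenvalues i| ≤ b := by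
  set v : Fin n → ℝ := ⇑(hM.eigenvectorBasis i) with hv
  have hvv : dotProduct (star v) v = 1 := by
    have h := hM.eigenvectorBasis.orthonormal.1 i
    have h' : (inner ℝ (hM.eigenvectorBasis i) (hM.eigenvectorBasis i) : ℝ) = 1 := by
      rw [real_inner_self_eq_norm_sq, h]; norm_num
    rw [← h', EuclideanSpace.inner_eq_star_dotProduct, dotProduct_comm]
  have heig : dotProduct (star v) (M *ᵥ v) = hM.eigenvalues i := by
    rw [hM.mulVec_eigenvectorBasis, ← hv, dotProduct_smul, hvv]
    simp
  have e1 := h1.dotProduct_mulVec_nonneg v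
  have e2 := h2.dotProduct_mulVec_nonneg v
  rw [sub_mulVec, dotProduct_sub, smul_mulVec, one_mulVec, dotProduct_smul, hvv,
    heig] at e1
  rw [add_mulVec, dotProduct_add, smul_mulVec, one_mulVec, dotProduct_smul, hvv,
    heig] at e2
  rw [abs_le]
  constructor <;> simp only [smul_eq_mul, mul_one] at e1 e2 <;> linarith

private lemma bern_psd_smul {M : Matrix (Fin n) (Fin n) ℝ} (hM : M.PosSemidef) {c : ℝ}
    (hc : 0 ≤ c) : (c • M).PosSemidef := by
  refine .of_dotProduct_mulVec_nonneg ?_ fun x => ?_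
  · unfold Matrix.IsHermitian
    rw [conjTranspose_smul, hM.1]
    simp
  · rw [smul_mulVec, dotProduct_smul]
    exact smul_nonneg hc (hM.dotProduct_mulVec_nonneg x)

/-- Pointwise (per-sample) Bernstein bound:
`exp (θ • M) ⪯ 1 + θ • M + (θ²/(2(1−B|θ|/3))) • M²` for symmetric `M` with eigenvalues in
`[-B, B]`. -/
private lemma bern_pointwise {M : Matrix (Fin n) (Fin n) ℝ} (hM : M.IsHermitian) {B θ : ℝ}
    (hB₁ : (B • (1 : Matrix (Fin n) (Fin n) ℝ) - M).PosSemidef)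
    (hB₂ : (B • (1 : Matrix (Fin n) (Fin n) ℝ) + M).PosSemidef)
    (hθ : B * |θ| < 3) :
    ((1 : Matrix (Fin n) (Fin n) ℝ) + θ • M
      + (θ ^ 2 / (2 * (1 - B * |θ| / 3))) • M ^ 2
      - NormedSpace.exp (θ • M)).PosSemidef := by
  set X : ℝ := 1 - B * |θ| / 3 with hX
  have hXpos : 0 < X := by
    have : B * |θ| / 3 < 1 := by linarith
    simpa [hX] using by linarith
  -- the scaled matrix
  set N : Matrix (Fin n) (Fin n) ℝ := θ • M with hN
  have hNherm : N.IsHermitian := by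
    unfold Matrix.IsHermitian
    rw [hN, conjTranspose_smul, hM]
    simp
  -- eigenvalue bounds for N
  have hNb1 : ((B * |θ|) • (1 : Matrix (Fin n) (Fin n) ℝ) - N).PosSemidef := by
    rcases le_or_gt 0 θ with h | h
    · have : (B * |θ|) • (1 : Matrix (Fin n) (Fin n) ℝ) - N
          = θ • (B • (1 : Matrix (Fin n) (Fin n) ℝ) - M) := by
        rw [abs_of_nonneg h, smul_sub, smul_smul, mul_comm]
      rw [this]; exact bern_psd_smul hB₁ h
    · have : (B * |θ|) • (1 : Matrix (Fin n) (Fin n) ℝ) - N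
          = (-θ) • (B • (1 : Matrix (Fin n) (Fin n) ℝ) + M) := by
        rw [abs_of_neg h, smul_add, smul_smul, mul_comm]
        simp [hN, sub_eq_add_neg, neg_smul]
      rw [this]; exact bern_psd_smul hB₂ (by linarith)
  have hNb2 : ((B * |θ|) • (1 : Matrix (Fin n) (Fin n) ℝ) + N).PosSemidef := by
    rcases le_or_gt 0 θ with h | h
    · have : (B * |θ|) • (1 : Matrix (Fin n) (Fin n) ℝ) + N
          = θ • (B • (1 : Matrix (Fin n) (Fin n) ℝ) + M) := by
        rw [abs_of_nonneg h, smul_add, smul_smul, mul_comm]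
      rw [this]; exact bern_psd_smul hB₂ h
    · have : (B * |θ|) • (1 : Matrix (Fin n) (Fin n) ℝ) + N
          = (-θ) • (B • (1 : Matrix (Fin n) (Fin n) ℝ) - M) := by
        rw [abs_of_neg h, smul_sub, smul_smul, mul_comm]
        simp [hN, sub_eq_add_neg, neg_smul]
      rw [this]; exact bern_psd_smul hB₁ (by linarith)
  have heigb : ∀ i, |hNherm.eigenvalues i| ≤ B * |θ| :=
    bern_eig_abs_le hNherm hNb1 hNb2
  set μ : Fin n → ℝ := hNherm.eigenvalues with hμ
  set c : ℝ := 1 / (2 * X) with hc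
  -- scalar inequality on each eigenvalue
  have hpt : ∀ i, Real.exp (μ i) ≤ 1 + μ i + c * μ i ^ 2 := by
    intro i
    have habs : |μ i| < 3 := lt_of_le_of_lt (heigb i) hθ
    have h1 := bern_exp_le_quad (μ i) habs
    have hXle : 2 * X ≤ 2 * (1 - |μ i| / 3) := by
      have := heigb i
      simp only [hX]
      linarith
    have h2 : μ i ^ 2 / (2 * (1 - |μ i| / 3)) ≤ μ i ^ 2 / (2 * X) :=
      div_le_div_of_nonneg_left (by positivity) (by positivity) hXle
    have h3 : μ i ^ 2 / (2 * X) = c * μ i ^ 2 := by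
      rw [hc]; field_simp
    linarith [h1, h2, h3.le, h3.ge]
  -- turn it into a matrix inequality via the spectral decomposition
  have hpsd : (bernConj hNherm ((fun i => 1 + μ i + c * μ i ^ 2)
        - fun i => Real.exp (μ i))).PosSemidef := by
    apply bernConj_psd
    intro i
    have := hpt i
    simp only [Pi.sub_apply]
    linarith
  rw [← bernConj_sub] at hpsd
  -- identify the two conjugated matrices
  have hexp : bernConj hNherm (fun i => Real.exp (μ i)) = NormedSpace.exp N :=
    (bernConj_exp hNherm).symm
  have hpoly : bernConj hNherm (fun i => 1 + μ i + c * μ i ^ 2)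
      = 1 + N + c • (N * N) := by
    have hfun : (fun i => 1 + μ i + c * μ i ^ 2)
        = ((1 : Fin n → ℝ) + μ) + c • (μ * μ) := by
      funext i
      simp only [Pi.add_apply, Pi.smul_apply, Pi.mul_apply, Pi.one_apply, smul_eq_mul]
      ring
    rw [hfun, ← bernConj_add, ← bernConj_add, bernConj_one, ← bernConj_smul,
      ← bernConj_mul, bernConj_eig]
  have hNN : c • (N * N) = (θ ^ 2 / (2 * X)) • M ^ 2 := by
    have h1 : N * N = (θ * θ) • (M * M) := by
      rw [hN, Matrix.smul_mul, Matrix.mul_smul, smul_smul]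
    have h2 : M * M = M ^ 2 := (pow_two M).symm
    rw [h1, smul_smul, h2]
    congr 1
    rw [hc]
    field_simp
  rw [hexp, hpoly, hNN] at hpsd
  exact hpsd

private lemma bern_one_add_le_exp {A : Matrix (Fin n) (Fin n) ℝ} (hA : A.IsHermitian) :
    (NormedSpace.exp A - (1 + A)).PosSemidef := by
  have h1 : (1 : Matrix (Fin n) (Fin n) ℝ) + A = bernConj hA (1 + hA.eigenvalues) := by
    rw [← bernConj_add, bernConj_one, bernConj_eig]
  rw [bernConj_exp hA, h1, bernConj_sub]
  apply bernConj_psd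
  intro i
  simp only [Pi.sub_apply, Pi.add_apply, Pi.one_apply]
  have := Real.add_one_le_exp (hA.eigenvalues i)
  linarith

private lemma bern_psd_sum {ι : Type} [Fintype ι] (f : ι → Matrix (Fin n) (Fin n) ℝ)
    (h : ∀ a, (f a).PosSemidef) : (∑ a, f a).PosSemidef :=
  Finset.sum_induction f _ (fun _ _ ha hb => ha.add hb) Matrix.PosSemidef.zero
    (fun a _ => h a)

end MatrixPart

/-- Bernstein corrector in expectation: for mean-zero symmetric random matrices with
eigenvalues in `[−B, B]` and `B·|θ| < 3`,
`E[exp(θ • U)] ⪯ exp((θ²/(2(1 − B|θ|/3))) • E[U²])`. -/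
theorem bernstein_corrector_expectation {n : ℕ} (Ω : Type) [Fintype Ω] [Nonempty Ω]
    (p : Ω → ℝ) (hp : ∀ a, 0 ≤ p a) (hp1 : ∑ a, p a = 1)
    (U : Ω → Matrix (Fin n) (Fin n) ℝ) (B : ℝ)
    (hUsymm : ∀ a, (U a).IsSymm)
    (hmean : ∑ a, p a • U a = 0)
    (hB₁ : ∀ a, (B • (1 : Matrix (Fin n) (Fin n) ℝ) - U a).PosSemidef)
    (hB₂ : ∀ a, (B • (1 : Matrix (Fin n) (Fin n) ℝ) + U a).PosSemidef)
    (θ : ℝ) (hθ : B * |θ| < 3) :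
    (NormedSpace.exp ((θ ^ 2 / (2 * (1 - B * |θ| / 3))) • ∑ a, p a • (U a) ^ 2)
      - ∑ a, p a • NormedSpace.exp (θ • U a)).PosSemidef := by
  have hherm : ∀ a, (U a).IsHermitian := by
    intro a
    unfold Matrix.IsHermitian
    ext i j
    rw [conjTranspose_apply, star_trivial]
    exact (hUsymm a).apply i j
  set g : ℝ := θ ^ 2 / (2 * (1 - B * |θ| / 3)) with hg
  set S : Matrix (Fin n) (Fin n) ℝ := ∑ a, p a • (U a) ^ 2 with hS
  set E : Matrix (Fin n) (Fin n) ℝ := ∑ a, p a • NormedSpace.exp (θ • U a) with hE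
  -- per-sample bound, summed
  have hsum : (∑ a, p a • ((1 : Matrix (Fin n) (Fin n) ℝ) + θ • U a + g • (U a) ^ 2
      - NormedSpace.exp (θ • U a))).PosSemidef := by
    apply bern_psd_sum
    intro a
    exact bern_psd_smul (bern_pointwise (hherm a) (hB₁ a) (hB₂ a) hθ) (hp a)
  -- compute the sum
  have hkey : (∑ a, p a • ((1 : Matrix (Fin n) (Fin n) ℝ) + θ • U a + g • (U a) ^ 2
      - NormedSpace.exp (θ • U a))) = 1 + g • S - E := by
    have h1 : ∀ a : Ω, p a • ((1 : Matrix (Fin n) (Fin n) ℝ) + θ • U a + g • (U a) ^ 2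
        - NormedSpace.exp (θ • U a))
        = p a • (1 : Matrix (Fin n) (Fin n) ℝ) + θ • (p a • U a) + g • (p a • (U a) ^ 2)
          - p a • NormedSpace.exp (θ • U a) := by
      intro a
      rw [smul_sub, smul_add, smul_add, smul_comm (p a) θ, smul_comm (p a) g]
    rw [Finset.sum_congr rfl (fun a _ => h1 a), Finset.sum_sub_distrib,
      Finset.sum_add_distrib, Finset.sum_add_distrib, ← Finset.sum_smul,
      ← Finset.smul_sum, ← Finset.smul_sum, hp1, hmean, one_smul, smul_zero, add_zero, ← hS, ← hE]
  rw [hkey] at hsum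
  -- Hermitian-ness of g • S
  have hSherm : (g • S).IsHermitian := by
    unfold Matrix.IsHermitian
    rw [conjTranspose_smul, star_trivial]
    congr 1
    rw [hS, conjTranspose_sum]
    refine Finset.sum_congr rfl fun a _ => ?_
    rw [conjTranspose_smul, star_trivial, (hherm a).pow 2]
  have h4 := bern_one_add_le_exp hSherm
  have h5 := h4.add hsum
  rw [sub_add_sub_cancel] at h5
  exact h5
end

section
/- Matrix Chernoff chord bound (deterministic part of Lemma B.1): let N be a real symmetric n×n matrix with 0 ⪯ N ⪯ r • I for some r > 0 (N and r • I − N are positive semidefinite), and let θ be any real number. Then exp(θ • N) ⪯ I + ((exp(r·θ) − 1)/r) • N; that is, I + ((exp(r·θ) − 1)/r) • N − exp(θ • N) is positive semidefinite. -/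
open Matrix BigOperators

lemma scalar_chord {r θ x : ℝ} (hr : 0 < r) (hx0 : 0 ≤ x) (hxr : x ≤ r) :
    Real.exp (θ * x) ≤ 1 + (Real.exp (r * θ) - 1) / r * x := by
  have ht0 : 0 ≤ x / r := div_nonneg hx0 hr.le
  have ht1 : x / r ≤ 1 := (div_le_one hr).mpr hxr
  have h := convexOn_exp.2 (Set.mem_univ (0 : ℝ)) (Set.mem_univ (r * θ))
    (by linarith : (0:ℝ) ≤ 1 - x / r) ht0 (by ring)
  have hx : (1 - x / r) • (0:ℝ) + (x / r) • (r * θ) = θ * x := by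
    show (1 - x / r) * (0:ℝ) + (x / r) * (r * θ) = θ * x
    rw [mul_zero, zero_add, ← mul_assoc, div_mul_cancel₀ x hr.ne', mul_comm]
  rw [hx] at h
  calc Real.exp (θ * x) ≤ (1 - x / r) * Real.exp 0 + (x / r) * Real.exp (r * θ) := h
    _ = 1 + (Real.exp (r * θ) - 1) / r * x := by
        rw [Real.exp_zero]
        field_simp
        ring

/-- Matrix Chernoff chord bound: if `0 ⪯ N ⪯ r • I` with `r > 0`, then for every `θ`,
`exp(θ • N) ⪯ I + ((exp(rθ) − 1)/r) • N`. -/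
theorem matrix_chernoff_chord_bound {n : ℕ} (N : Matrix (Fin n) (Fin n) ℝ) (r θ : ℝ)
    (hr : 0 < r) (hN : N.PosSemidef)
    (hNr : (r • (1 : Matrix (Fin n) (Fin n) ℝ) - N).PosSemidef) :
    ((1 : Matrix (Fin n) (Fin n) ℝ) + ((Real.exp (r * θ) - 1) / r) • N
      - NormedSpace.exp (θ • N)).PosSemidef := by
  classical
  have hH := hN.1
  set μ := hH.eigenvalues with hμdef
  set U : Matrix (Fin n) (Fin n) ℝ := ↑(hH.eigenvectorUnitary) with hUdef
  have hU1 : U * star U = 1 := mem_unitaryGroup_iff.mp hH.eigenvectorUnitary.2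
  have hU1' : star U * U = 1 := mem_unitaryGroup_iff'.mp hH.eigenvectorUnitary.2
  have hUinv : U⁻¹ = star U := inv_eq_right_inv hU1
  have hUunit : IsUnit U := isUnit_iff_exists.mpr ⟨star U, hU1, hU1'⟩
  have hspec : N = U * Matrix.diagonal μ * star U := by
    have := hH.spectral_theorem
    simpa using this
  -- eigenvalue bounds
  have hμ0 : ∀ i, 0 ≤ μ i := hN.eigenvalues_nonneg
  have hμr : ∀ i, μ i ≤ r := by
    intro i
    set v : Fin n → ℝ := ⇑(hH.eigenvectorBasis i) with hv
    have hvv : v ⬝ᵥ v = 1 := by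
      have hnorm : ‖hH.eigenvectorBasis i‖ = 1 := hH.eigenvectorBasis.orthonormal.1 i
      have := congrArg (· ^ 2) hnorm
      rw [EuclideanSpace.norm_eq] at this
      simp only [Real.sq_sqrt (Finset.sum_nonneg fun j _ => sq_nonneg _), one_pow] at this
      simpa [dotProduct, Real.norm_eq_abs, sq_abs, pow_two, mul_comm] using this
    have hmv : N *ᵥ v = μ i • v := hH.mulVec_eigenvectorBasis i
    have h2 := hNr.dotProduct_mulVec_nonneg v
    rw [sub_mulVec, smul_mulVec, one_mulVec, hmv] at h2
    have : star v ⬝ᵥ (r • v - μ i • v) = r - μ i := by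
      rw [dotProduct_sub, dotProduct_smul, dotProduct_smul]
      simp [hvv]
    rw [this] at h2
    linarith [h2]
  set c := (Real.exp (r * θ) - 1) / r with hc
  set d : Fin n → ℝ := fun i => 1 + c * μ i - Real.exp (θ * μ i) with hd
  have hd0 : ∀ i, 0 ≤ d i := by
    intro i
    have := scalar_chord hr (hμ0 i) (hμr i) (θ := θ)
    simp only [hd]
    linarith
  -- exp of θ • N
  have hθN : θ • N = U * Matrix.diagonal (fun i => θ * μ i) * star U := by
    rw [hspec, ← smul_mul_assoc, ← mul_smul_comm, ← Matrix.diagonal_smul]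
    congr 2
  have hexp : NormedSpace.exp (θ • N)
      = U * Matrix.diagonal (fun i => Real.exp (θ * μ i)) * star U := by
    rw [hθN, ← hUinv, Matrix.exp_conj U _ hUunit, hUinv, Matrix.exp_diagonal]
    congr 2
    rw [Pi.exp_def]
    ext i
    rw [Real.exp_eq_exp_ℝ]
  -- rewrite the whole matrix as a conjugation of a diagonal
  have hmain : (1 : Matrix (Fin n) (Fin n) ℝ) + c • N - NormedSpace.exp (θ • N)
      = U * Matrix.diagonal d * star U := by
    have h1 : (1 : Matrix (Fin n) (Fin n) ℝ) = U * Matrix.diagonal (fun _ => (1:ℝ)) * star U := by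
      rw [Matrix.diagonal_one, mul_one, hU1]
    have hcN : c • N = U * Matrix.diagonal (fun i => c * μ i) * star U := by
      rw [hspec, ← smul_mul_assoc, ← mul_smul_comm, ← Matrix.diagonal_smul]
      congr 2
    rw [h1, hcN, hexp, ← add_mul, ← sub_mul, ← mul_add, ← mul_sub,
      Matrix.diagonal_add, Matrix.diagonal_sub]
  rw [hmain]
  exact (Matrix.posSemidef_diagonal_iff.mpr hd0).mul_mul_conjTranspose_same U
end

section
/- Deterministic core of Theorem 3.2 (diffusion restricted to a vertex subset equals degrees times inverse Schur complement): let I₁, I₂ be finite nonempty types, I = I₁ ⊕ I₂, and let A : Matrix I I ℝ be symmetric with nonnegative entries, zero diagonal, and positive row sums (∑ j, A i j > 0 for every i). Let D be the diagonal matrix with D i i = ∑ j, A i j, let D₂ be the diagonal matrix over I₂ with the corresponding degrees, and fix β ∈ (0,1). Write M = D − β • A with blocks M₁₁, M₁₂, M₂₁, M₂₂ under the decomposition I = I₁ ⊕ I₂. Then: (i) M is positive definite; (ii) M₁₁ is positive definite; and (iii) the (I₂, I₂) block of (1 − β • (A * D⁻¹))⁻¹ equals D₂ * (M₂₂ − M₂₁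 * M₁₁⁻¹ * M₁₂)⁻¹. -/
open Matrix BigOperators


lemma posdef_diag_sub_smul {n : Type} [Fintype n] [DecidableEq n]
    (A : Matrix n n ℝ) (hA : A.IsSymm) (hnn : ∀ i j, 0 ≤ A i j)
    (d : n → ℝ) (hd : ∀ i, 0 < d i) (hrow : ∀ i, ∑ j, A i j ≤ d i)
    (β : ℝ) (hβ0 : 0 < β) (hβ1 : β < 1) :
    (Matrix.diagonal d - β • A).PosDef := by
  have hsymm : ∀ i j, A j i = A i j := fun i j => by
    have := congrFun (congrFun hA i) j; simpa [Matrix.transpose_apply] using this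
  rw [Matrix.posDef_iff_dotProduct_mulVec]
  constructor
  · ext i j
    simp only [Matrix.conjTranspose_apply, Matrix.sub_apply, Matrix.smul_apply,
      Matrix.diagonal_apply, smul_eq_mul, star_trivial, hsymm i j]
    by_cases h : i = j <;> simp [h, eq_comm]
  · intro x hx
    have key : ∑ i, ∑ j, A i j * x j * x i ≤ ∑ i, d i * x i ^ 2 := by
      have step1 : ∑ i, ∑ j, A i j * x j * x i
          ≤ ∑ i, ∑ j, (A i j * x i ^ 2 / 2 + A i j * x j ^ 2 / 2) := by
        refine Finset.sum_le_sum fun i _ => Finset.sum_le_sum fun j _ => ?_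
        nlinarith [hnn i j, sq_nonneg (x i - x j)]
      have hswap : ∑ i, ∑ j, A i j * x j ^ 2 / 2 = ∑ i, ∑ j, A i j * x i ^ 2 / 2 := by
        rw [Finset.sum_comm]
        exact Finset.sum_congr rfl fun j _ => Finset.sum_congr rfl fun i _ => by
          rw [hsymm j i]
      have step2 : ∑ i, ∑ j, (A i j * x i ^ 2 / 2 + A i j * x j ^ 2 / 2)
          = ∑ i, (∑ j, A i j) * x i ^ 2 := by
        simp_rw [Finset.sum_add_distrib]
        rw [hswap, ← Finset.sum_add_distrib]
        refine Finset.sum_congr rfl fun i _ => ?_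
        rw [← Finset.sum_div, ← Finset.sum_mul]
        ring
      have step3 : ∑ i, (∑ j, A i j) * x i ^ 2 ≤ ∑ i, d i * x i ^ 2 :=
        Finset.sum_le_sum fun i _ => mul_le_mul_of_nonneg_right (hrow i) (sq_nonneg _)
      linarith
    have hpos : 0 < ∑ i, d i * x i ^ 2 := by
      obtain ⟨i, hi⟩ := Function.ne_iff.mp hx
      refine Finset.sum_pos' (fun j _ => mul_nonneg (hd j).le (sq_nonneg _))
        ⟨i, Finset.mem_univ i, mul_pos (hd i)
          (lt_of_le_of_ne (sq_nonneg _) (Ne.symm (pow_ne_zero 2 hi)))⟩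
    have expand : dotProduct (star x) ((Matrix.diagonal d - β • A) *ᵥ x)
        = ∑ i, d i * x i ^ 2 - β * ∑ i, ∑ j, A i j * x j * x i := by
      simp only [star_trivial, dotProduct, Matrix.mulVec, dotProduct, Matrix.sub_apply,
        Matrix.smul_apply, smul_eq_mul, sub_mul, mul_sub, Finset.sum_sub_distrib,
        Finset.mul_sum]
      congr 1
      · refine Finset.sum_congr rfl fun i _ => ?_
        rw [Finset.sum_eq_single i (fun j _ hj => by
          simp [Matrix.diagonal_apply_ne' _ hj]) (by simp)]
        simp [Matrix.diagonal_apply_eq]; ring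
      · exact Finset.sum_congr rfl fun i _ => Finset.sum_congr rfl fun j _ => by ring
    rw [expand]
    nlinarith [mul_le_mul_of_nonneg_left key hβ0.le]

/-- Deterministic core of Theorem 3.2: for a symmetric nonnegative weight matrix `A` with
zero diagonal and positive degrees, `β ∈ (0,1)`, degree matrix `D` and `M = D − β • A`,
the matrix `M` and its `(1,1)` block are positive definite, and the `(I₂, I₂)` block of the
diffusion `(I − β • A D⁻¹)⁻¹` equals `D₂` times the inverse of the Schur complement of `M`
onto `I₂`. -/
theorem diffusion_subgraph_eq_deg_mul_inv_schur
    (I₁ I₂ : Type) [Fintype I₁] [Fintype I₂] [DecidableEq I₁] [DecidableEq I₂]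
    [Nonempty I₁] [Nonempty I₂]
    (A : Matrix (I₁ ⊕ I₂) (I₁ ⊕ I₂) ℝ)
    (hA : A.IsSymm) (hnonneg : ∀ i j, 0 ≤ A i j) (hdiag : ∀ i, A i i = 0)
    (hdeg : ∀ i, 0 < ∑ j, A i j)
    (D : Matrix (I₁ ⊕ I₂) (I₁ ⊕ I₂) ℝ) (hD : D = Matrix.diagonal (fun i => ∑ j, A i j))
    (D₂ : Matrix I₂ I₂ ℝ) (hD₂ : D₂ = Matrix.diagonal (fun i : I₂ => ∑ j, A (Sum.inr i) j))
    (β : ℝ) (hβ0 : 0 < β) (hβ1 : β < 1)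
    (M : Matrix (I₁ ⊕ I₂) (I₁ ⊕ I₂) ℝ) (hM : M = D - β • A) :
    M.PosDef ∧ (M.toBlocks₁₁).PosDef ∧
      ((1 - β • (A * D⁻¹))⁻¹).toBlocks₂₂
        = D₂ * (M.toBlocks₂₂ - M.toBlocks₂₁ * (M.toBlocks₁₁)⁻¹ * M.toBlocks₁₂)⁻¹ := by
  have hsymm : ∀ i j, A j i = A i j := fun i j => by
    have := congrFun (congrFun hA i) j; simpa [Matrix.transpose_apply] using this
  -- (i)
  have hMpd : M.PosDef := by
    rw [hM, hD]
    exact posdef_diag_sub_smul A hA hnonneg _ hdeg (fun i => le_rfl) β hβ0 hβ1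
  -- (ii)
  have hblock : M.toBlocks₁₁
      = Matrix.diagonal (fun i : I₁ => ∑ j, A (Sum.inl i) j) - β • A.toBlocks₁₁ := by
    ext i j
    by_cases h : i = j <;>
      simp [hM, hD, Matrix.toBlocks₁₁, Matrix.diagonal_apply, h]
  have h11pd : (M.toBlocks₁₁).PosDef := by
    rw [hblock]
    refine posdef_diag_sub_smul _ ?_ (fun i j => hnonneg _ _) _
      (fun i => hdeg (Sum.inl i)) ?_ β hβ0 hβ1
    · ext i j; exact hsymm _ _
    · intro i
      rw [Fintype.sum_sum_type]
      have : (0:ℝ) ≤ ∑ j : I₂, A (Sum.inl i) (Sum.inr j) :=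
        Finset.sum_nonneg fun j _ => hnonneg _ _
      exact le_add_of_nonneg_right this
  refine ⟨hMpd, h11pd, ?_⟩
  -- (iii)
  have hDdet : IsUnit D.det := by
    rw [hD, Matrix.det_diagonal]
    exact (Finset.prod_pos fun i _ => hdeg i).ne'.isUnit
  haveI invD : Invertible D := D.invertibleOfIsUnitDet hDdet
  haveI invM : Invertible M := hMpd.isUnit.invertible
  haveI inv11 : Invertible M.toBlocks₁₁ := h11pd.isUnit.invertible
  haveI invFB : Invertible
      (Matrix.fromBlocks M.toBlocks₁₁ M.toBlocks₁₂ M.toBlocks₂₁ M.toBlocks₂₂) := by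
    rw [Matrix.fromBlocks_toBlocks]; exact invM
  haveI invSC := Matrix.invertibleOfFromBlocks₁₁Invertible
    M.toBlocks₁₁ M.toBlocks₁₂ M.toBlocks₂₁ M.toBlocks₂₂
  have h1 : (1 : Matrix (I₁ ⊕ I₂) (I₁ ⊕ I₂) ℝ) - β • (A * D⁻¹) = M * D⁻¹ := by
    rw [hM, Matrix.sub_mul, Matrix.mul_inv_of_invertible, Matrix.smul_mul]
  have h2 : (D * M⁻¹).toBlocks₂₂ = D₂ * (M⁻¹).toBlocks₂₂ := by
    ext i j
    simp [hD, hD₂, Matrix.toBlocks₂₂, Matrix.diagonal_mul, Matrix.mul_apply,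
      Matrix.diagonal_apply]
  have hSC : M.toBlocks₂₂ - M.toBlocks₂₁ * (M.toBlocks₁₁)⁻¹ * M.toBlocks₁₂
      = M.toBlocks₂₂ - M.toBlocks₂₁ * ⅟(M.toBlocks₁₁) * M.toBlocks₁₂ := by
    rw [Matrix.invOf_eq_nonsing_inv]
  have h3 : (M⁻¹).toBlocks₂₂
      = (M.toBlocks₂₂ - M.toBlocks₂₁ * (M.toBlocks₁₁)⁻¹ * M.toBlocks₁₂)⁻¹ := by
    have e := Matrix.invOf_fromBlocks₁₁_eq M.toBlocks₁₁ M.toBlocks₁₂ M.toBlocks₂₁ M.toBlocks₂₂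
    have e2 : ⅟(Matrix.fromBlocks M.toBlocks₁₁ M.toBlocks₁₂ M.toBlocks₂₁ M.toBlocks₂₂) = M⁻¹ := by
      rw [Matrix.invOf_eq_nonsing_inv, Matrix.fromBlocks_toBlocks]
    calc (M⁻¹).toBlocks₂₂
        = (⅟(Matrix.fromBlocks M.toBlocks₁₁ M.toBlocks₁₂ M.toBlocks₂₁ M.toBlocks₂₂)).toBlocks₂₂ := by
          rw [e2]
      _ = ⅟(M.toBlocks₂₂ - M.toBlocks₂₁ * ⅟(M.toBlocks₁₁) * M.toBlocks₁₂) := by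
          rw [e, Matrix.toBlocks_fromBlocks₂₂]
      _ = _ := by rw [Matrix.invOf_eq_nonsing_inv, ← hSC]
  calc ((1 - β • (A * D⁻¹))⁻¹).toBlocks₂₂
      = (D * M⁻¹).toBlocks₂₂ := by
        rw [h1, Matrix.mul_inv_rev, Matrix.inv_inv_of_invertible]
    _ = D₂ * (M⁻¹).toBlocks₂₂ := h2
    _ = _ := by rw [h3]
end

section
/- Convergence of the diffusion series (limit appearing in Theorem 3.2): let I be a finite nonempty type and A : Matrix I I ℝ be symmetric with nonnegative entries, zero diagonal, and positive row sums; let D be the diagonal matrix with D i i = ∑ j, A i j, and let β ∈ (0,1). Then the family k ↦ (β • (A * D⁻¹))^k is summable, and ∑' k, (β • (A * D⁻¹))^k = (1 − β • (A * D⁻¹))⁻¹ = D * (D − β • A)⁻¹. -/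
open Matrix BigOperators

/-- Convergence of the diffusion series: for a symmetric nonnegative weight matrix `A` with
zero diagonal, positive degrees, degree matrix `D` and `β ∈ (0,1)`, the geometric series of
`β • (A * D⁻¹)` is summable, with sum `(I − β • A D⁻¹)⁻¹ = D (D − β A)⁻¹`. -/
theorem diffusion_series_summable_and_sum
    (I : Type) [Fintype I] [DecidableEq I] [Nonempty I]
    (A : Matrix I I ℝ)
    (hA : A.IsSymm) (hnonneg : ∀ i j, 0 ≤ A i j) (hdiag : ∀ i, A i i = 0)
    (hdeg : ∀ i, 0 < ∑ j, A i j)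
    (D : Matrix I I ℝ) (hD : D = Matrix.diagonal (fun i => ∑ j, A i j))
    (β : ℝ) (hβ0 : 0 < β) (hβ1 : β < 1) :
    Summable (fun k : ℕ => (β • (A * D⁻¹)) ^ k) ∧
      (∑' k : ℕ, (β • (A * D⁻¹)) ^ k) = (1 - β • (A * D⁻¹))⁻¹ ∧
      (∑' k : ℕ, (β • (A * D⁻¹)) ^ k) = D * (D - β • A)⁻¹ := by
  letI : NormedRing (Matrix I I ℝ) := Matrix.linftyOpNormedRing
  haveI : HasSummableGeomSeries (Matrix I I ℝ) := by
    have : CompleteSpace (Matrix I I ℝ) := by infer_instance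
    exact @instHasSummableGeomSeriesOfCompleteSpace (Matrix I I ℝ) Matrix.linftyOpNormedRing this
  set d : I → ℝ := fun i => ∑ j, A i j with hd
  have hdet : IsUnit D.det := by
    rw [hD, Matrix.det_diagonal]
    exact (Finset.prod_pos (fun i _ => hdeg i)).ne'.isUnit
  have hDinv : D⁻¹ = Matrix.diagonal (fun i => (d i)⁻¹) := by
    apply Matrix.inv_eq_right_inv
    rw [hD, Matrix.diagonal_mul_diagonal]
    have h1 : (fun i => d i * (d i)⁻¹) = fun _ : I => (1 : ℝ) :=
      funext fun i => mul_inv_cancel₀ (hdeg i).ne'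
    rw [h1, Matrix.diagonal_one]
  have hDD : D * D⁻¹ = 1 := Matrix.mul_nonsing_inv D hdet
  have hDD' : D⁻¹ * D = 1 := Matrix.nonsing_inv_mul D hdet
  have hcanc1 : ∀ X : Matrix I I ℝ, D⁻¹ * (D * X) = X := by
    intro X; rw [← Matrix.mul_assoc, hDD', Matrix.one_mul]
  set N : Matrix I I ℝ := β • (D⁻¹ * A) with hN
  set M : Matrix I I ℝ := β • (A * D⁻¹) with hM
  have hMN : M = D * N * D⁻¹ := by
    simp only [hM, hN, Matrix.mul_smul, Matrix.smul_mul, ← Matrix.mul_assoc, hDD,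
      Matrix.one_mul]
  -- norm of N is β < 1
  have hNentry : ∀ i j, N i j = β * ((d i)⁻¹ * A i j) := by
    intro i j
    rw [hN, hDinv]
    simp [Matrix.diagonal_mul]
  have hnorm : ‖N‖ < 1 := by
    rw [Matrix.linfty_opNorm_def]
    have hrow : ∀ i : I, (∑ j, ‖N i j‖₊) = (⟨β, hβ0.le⟩ : NNReal) := by
      intro i
      have hsum : ∑ j, ‖N i j‖ = β := by
        have : ∀ j, ‖N i j‖ = β * ((d i)⁻¹ * A i j) := by
          intro j
          rw [hNentry i j, Real.norm_eq_abs, abs_of_nonneg]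
          exact mul_nonneg hβ0.le (mul_nonneg (inv_nonneg.2 (hdeg i).le) (hnonneg i j))
        rw [Finset.sum_congr rfl (fun j _ => this j), ← Finset.mul_sum, ← Finset.mul_sum,
          inv_mul_cancel₀ (hdeg i).ne', mul_one]
      ext
      push_cast
      simp at hsum ⊢; exact hsum
    have hsup : (Finset.univ.sup fun i : I => ∑ j, ‖N i j‖₊) = (⟨β, hβ0.le⟩ : NNReal) := by
      apply le_antisymm
      · exact Finset.sup_le fun i _ => (hrow i).le
      · obtain ⟨i⟩ := ‹Nonempty I›
        exact le_trans (hrow i).ge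
          (Finset.le_sup (f := fun i : I => ∑ j, ‖N i j‖₊) (Finset.mem_univ i))
    rw [hsup]
    exact_mod_cast hβ1
  have hsummN : Summable (fun k : ℕ => N ^ k) := summable_geometric_of_norm_lt_one hnorm
  set S : Matrix I I ℝ := ∑' k : ℕ, N ^ k with hS
  have hgeom1 : S * (1 - N) = 1 := geom_series_mul_neg N hnorm
  have hgeom2 : (1 - N) * S = 1 := mul_neg_geom_series N hnorm
  have hconj : ∀ k : ℕ, M ^ k = D * N ^ k * D⁻¹ := by
    intro k
    induction k with
    | zero => simp [hDD]
    | succ k ih =>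
      rw [pow_succ, pow_succ, ih, hMN]
      simp only [Matrix.mul_assoc, hcanc1]
  have hsummM : Summable (fun k : ℕ => M ^ k) := by
    have := (hsummN.mul_left D).mul_right D⁻¹
    simpa [← hconj] using this
  have htsumM : (∑' k : ℕ, M ^ k) = D * S * D⁻¹ := by
    calc (∑' k : ℕ, M ^ k) = ∑' k : ℕ, D * N ^ k * D⁻¹ := tsum_congr hconj
      _ = (∑' k : ℕ, D * N ^ k) * D⁻¹ := (hsummN.mul_left D).tsum_mul_right D⁻¹
      _ = D * S * D⁻¹ := by rw [hsummN.tsum_mul_left D]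
  have h1M : 1 - M = D * (1 - N) * D⁻¹ := by
    rw [Matrix.mul_sub, Matrix.mul_one, Matrix.sub_mul, hDD, hMN]
  have heq1 : (∑' k : ℕ, M ^ k) = (1 - M)⁻¹ := by
    symm
    apply Matrix.inv_eq_right_inv
    rw [htsumM, h1M]
    simp only [Matrix.mul_assoc, hcanc1]
    rw [show (1 - N) * (S * D⁻¹) = D⁻¹ by
      rw [← Matrix.mul_assoc, hgeom2, Matrix.one_mul]]
    exact hDD
  have hDbA : D - β • A = D * (1 - N) := by
    rw [Matrix.mul_sub, Matrix.mul_one, hN, Matrix.mul_smul, ← Matrix.mul_assoc, hDD,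
      Matrix.one_mul]
  have hinvN : (1 - N)⁻¹ = S := Matrix.inv_eq_right_inv hgeom2
  refine ⟨hsummM, heq1, ?_⟩
  rw [htsumM, hDbA, Matrix.mul_inv_rev, hinvN, Matrix.mul_assoc]
end
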